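/- arXiv:1812.00571 — 2 statements merged into one kernel-verified Lean document; each statement's English description precedes it below -/
import Mathlib

section
/- Let I be a strongly stable ideal whose b-pol(I) has irredundant irreducible decomposition ⋂_{s=1}^r (x_{i,γ_i^{⟨s⟩}} : 1 ≤ i ≤ t_s). Then the squarefree strongly stable ideal I^σ ⊂ T = k[x_1,...,x_N] has irredundant irreducible decomposition I^σ = ⋂_{s=1}^r (x_{γ_i^{⟨s⟩}+i−1} : 1 ≤ i ≤ t_s). -/
open MvPolynomial Classical

noncomputable section

/-- The monomial `x^a` with coefficient `1`. -/
def mon {σ : Type*} (k : Type*) [Field k] (a : σ →₀ ℕ) : MvPolynomial σ k :=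
  MvPolynomial.monomial a 1

/-- `x^a` for an exponent vector given as a function on a finite type. -/
def monF {σ : Type*} [Fintype σ] (k : Type*) [Field k] (a : σ → ℕ) : MvPolynomial σ k :=
  mon k (Finsupp.equivFunOnFinite.symm a)

/-- A monomial ideal: an ideal generated by monomials. -/
def IsMonomialIdeal {σ : Type*} [Fintype σ] {k : Type*} [Field k]
    (I : Ideal (MvPolynomial σ k)) : Prop :=
  ∃ A : Set (σ → ℕ), I = Ideal.span ((monF k) '' A)

/-- The set `G(I)` of (exponent vectors of) minimal monomial generators of a monomial
ideal `I`: monomials in `I` such that dividing by any variable leaves `I`. -/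
def minGens {σ : Type*} [Fintype σ] {k : Type*} [Field k]
    (I : Ideal (MvPolynomial σ k)) : Set (σ → ℕ) :=
  {a | monF k a ∈ I ∧ ∀ i : σ, 0 < a i → monF k (a - Pi.single i 1) ∉ I}

/-- The total degree `|a|` of an exponent vector. -/
def degV {σ : Type*} [Fintype σ] (a : σ → ℕ) : ℕ := ∑ i, a i

/-- A strongly stable (monomial) ideal in `k[x_1, …, x_n]`. -/
def StronglyStable {n : ℕ} {k : Type*} [Field k]
    (I : Ideal (MvPolynomial (Fin n) k)) : Prop :=
  IsMonomialIdeal I ∧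
    ∀ a ∈ minGens I, ∀ i j : Fin n, j < i → 0 < a i →
      monF k (a - Pi.single i 1 + Pi.single j 1) ∈ I

/-- All minimal generators of `I` have degree at most `d`. -/
def GensDegLE {σ : Type*} [Fintype σ] {k : Type*} [Field k]
    (I : Ideal (MvPolynomial σ k)) (d : ℕ) : Prop :=
  ∀ a ∈ minGens I, degV a ≤ d

/-- `psum a i = a_1 + ⋯ + a_{i-1}` (the partial sum over indices `< i`). -/
def psum {n : ℕ} (a : Fin n → ℕ) (i : Fin n) : ℕ :=
  ∑ j ∈ Finset.univ.filter (fun j => j < i), a j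

/-- The exponent vector of the alternative polarization `b-pol(x^a)`:
`b-pol(x^a) = ∏_{1 ≤ i ≤ n, b_{i-1}+1 ≤ j ≤ b_i} x_{i,j}` where `b_i = a_1 + ⋯ + a_i`. -/
def bpolExp {n : ℕ} (d : ℕ) (a : Fin n → ℕ) : Fin n × Fin d → ℕ := fun p =>
  if psum a p.1 ≤ (p.2 : ℕ) ∧ (p.2 : ℕ) < psum a p.1 + a p.1 then 1 else 0

/-- The alternative polarization `b-pol(I) ⊆ k[x_{i,j}]` of a monomial ideal `I`. -/
def bpolIdeal {n : ℕ} (d : ℕ) {k : Type*} [Field k]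
    (I : Ideal (MvPolynomial (Fin n) k)) : Ideal (MvPolynomial (Fin n × Fin d) k) :=
  Ideal.span {q | ∃ a ∈ minGens I, q = monF k (bpolExp d a)}

/-- The prime monomial ideal `(x_i : i ∈ F)`. -/
def varIdeal {σ : Type*} (k : Type*) [Field k] (F : Set σ) : Ideal (MvPolynomial σ k) :=
  Ideal.span (MvPolynomial.X '' F)

/-- `F` gives an irreducible component `(x_i : i ∈ F)` of the squarefree monomial ideal `J`,
i.e. `F` is minimal among subsets with `J ⊆ (x_i : i ∈ F)`. -/
def IsIrredCompSF {σ : Type*} {k : Type*} [Field k]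
    (J : Ideal (MvPolynomial σ k)) (F : Set σ) : Prop :=
  J ≤ varIdeal k F ∧ ∀ F' ⊆ F, J ≤ varIdeal k F' → F' = F

/-- The Alexander dual of a squarefree monomial ideal: the ideal generated by the
monomials `∏_{i ∈ F} x_i` over the irreducible components `(x_i : i ∈ F)` of `J`. -/
def adual {σ : Type*} [Fintype σ] {k : Type*} [Field k]
    (J : Ideal (MvPolynomial σ k)) : Ideal (MvPolynomial σ k) :=
  Ideal.span {q | ∃ F : Set σ, IsIrredCompSF J F ∧
    q = monF k (fun i => if i ∈ F then 1 else 0)}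

/-- Transpose `x_{i,j} ↦ y_{j,i}` of an ideal of `k[x_{i,j}]`. -/
def transposeIdeal {n d : ℕ} {k : Type*} [Field k]
    (J : Ideal (MvPolynomial (Fin n × Fin d) k)) : Ideal (MvPolynomial (Fin d × Fin n) k) :=
  Ideal.map (MvPolynomial.rename (Prod.swap : Fin n × Fin d → Fin d × Fin n)
    : MvPolynomial (Fin n × Fin d) k →ₐ[k] MvPolynomial (Fin d × Fin n) k) J

end

noncomputable section

/-- The exponent vector of `(x^a)^σ = ∏_{i=1}^e x_{α_i + i - 1}` (0-based indexing):
variable `i` occurring with multiplicity `a_i` contributes the squarefree variables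
`x_{i + j}` for `psum a i ≤ j < psum a i + a_i`. -/
def sigmaExp {n : ℕ} (N : ℕ) (a : Fin n → ℕ) : Fin N → ℕ := fun q =>
  if ∃ i : Fin n, (i : ℕ) + psum a i ≤ (q : ℕ) ∧ (q : ℕ) < (i : ℕ) + psum a i + a i
  then 1 else 0

/-- The squarefree strongly stable ideal `I^σ ⊆ T = k[x_1,…,x_N]` of Aramova–Herzog–Hibi. -/
def sigmaIdeal {n : ℕ} (N : ℕ) {k : Type*} [Field k]
    (I : Ideal (MvPolynomial (Fin n) k)) : Ideal (MvPolynomial (Fin N) k) :=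
  Ideal.span {q | ∃ a ∈ minGens I, q = monF k (sigmaExp N a)}

section Aux1
open Finset
set_option linter.unusedSectionVars false

variable {σ : Type*} [Fintype σ] {k : Type*} [Field k]

lemma symm_apply (a : σ → ℕ) (i : σ) : (Finsupp.equivFunOnFinite.symm a) i = a i := rfl

lemma support_monF (a : σ → ℕ) :
    (monF k a).support = {Finsupp.equivFunOnFinite.symm a} := by
  classical
  simp [monF, mon, MvPolynomial.support_monomial]

lemma monF_ne_zero (a : σ → ℕ) : monF k a ≠ 0 := by
  simp [monF, mon, MvPolynomial.monomial_eq_zero]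

lemma monF_add (a b : σ → ℕ) : monF k (a + b) = monF k a * monF k b := by
  have hsymm : Finsupp.equivFunOnFinite.symm (a + b)
      = Finsupp.equivFunOnFinite.symm a + Finsupp.equivFunOnFinite.symm b := by
    ext i
    simp [symm_apply]
  simp only [monF, mon, hsymm, MvPolynomial.monomial_mul, mul_one]

lemma image_monF (A : Set (σ → ℕ)) :
    (monF k) '' A
      = (fun s => MvPolynomial.monomial s (1:k)) '' (Finsupp.equivFunOnFinite.symm '' A) := by
  rw [Set.image_image]; rfl

lemma mem_span_monF {A : Set (σ → ℕ)} {f : MvPolynomial σ k} :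
    f ∈ Ideal.span ((monF k) '' A) ↔ ∀ b ∈ f.support, ∃ a ∈ A, ∀ i, a i ≤ b i := by
  rw [image_monF, MvPolynomial.mem_ideal_span_monomial_image]
  constructor
  · intro h b hb
    obtain ⟨si, hsi, hle⟩ := h b hb
    obtain ⟨a, ha, rfl⟩ := hsi
    exact ⟨a, ha, fun i => by simpa [symm_apply] using Finsupp.le_def.mp hle i⟩
  · intro h b hb
    obtain ⟨a, ha, hle⟩ := h b hb
    exact ⟨_, ⟨a, ha, rfl⟩, Finsupp.le_def.mpr (fun i => by simpa [symm_apply] using hle i)⟩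

lemma monF_mem_span_monF {A : Set (σ → ℕ)} {b : σ → ℕ} :
    monF k b ∈ Ideal.span ((monF k) '' A) ↔ ∃ a ∈ A, ∀ i, a i ≤ b i := by
  rw [mem_span_monF]
  constructor
  · intro h
    have := h _ (by rw [support_monF]; exact Finset.mem_singleton_self _)
    simpa [symm_apply] using this
  · intro h c hc
    rw [support_monF, Finset.mem_singleton] at hc
    subst hc
    simpa [symm_apply] using h

lemma mem_varIdeal {F : Set σ} {f : MvPolynomial σ k} :
    f ∈ varIdeal k F ↔ ∀ b ∈ f.support, ∃ i ∈ F, b i ≠ 0 :=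
  MvPolynomial.mem_ideal_span_X_image

lemma monF_mem_varIdeal {F : Set σ} {b : σ → ℕ} :
    monF k b ∈ varIdeal k F ↔ ∃ i ∈ F, b i ≠ 0 := by
  rw [mem_varIdeal]
  constructor
  · intro h
    have := h _ (by rw [support_monF]; exact Finset.mem_singleton_self _)
    simpa [symm_apply] using this
  · intro h c hc
    rw [support_monF, Finset.mem_singleton] at hc
    subst hc
    simpa [symm_apply] using h

lemma varIdeal_mono {F G : Set σ} (h : F ⊆ G) : varIdeal k F ≤ varIdeal k G :=
  Ideal.span_mono (Set.image_mono h)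

lemma monF_mem_of_le {I : Ideal (MvPolynomial σ k)} {a b : σ → ℕ}
    (hab : ∀ i, a i ≤ b i) (ha : monF k a ∈ I) : monF k b ∈ I := by
  have hb : monF k b = monF k a * monF k (fun i => b i - a i) := by
    rw [← monF_add]
    congr 1
    funext i
    have := hab i
    simp only [Pi.add_apply]
    omega
  rw [hb]
  exact Ideal.mul_mem_right _ _ ha

lemma single_le_degV (m : σ → ℕ) (i : σ) : m i ≤ degV m :=
  Finset.single_le_sum (fun _ _ => Nat.zero_le _) (Finset.mem_univ i)

lemma degV_sub_single {m : σ → ℕ} {i : σ} (hi : 0 < m i) :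
    degV (m - Pi.single i 1) + 1 = degV m := by
  have h1 : ∀ t, (m - Pi.single i 1 : σ → ℕ) t + (Pi.single i 1 : σ → ℕ) t = m t := by
    intro t
    by_cases ht : t = i
    · subst ht; simp [Pi.single_apply]; omega
    · simp [Pi.single_apply, ht]
  have h2 : ∑ t, ((m - Pi.single i 1 : σ → ℕ) t + (Pi.single i 1 : σ → ℕ) t) = ∑ t, m t :=
    Finset.sum_congr rfl (fun t _ => h1 t)
  rw [Finset.sum_add_distrib] at h2
  have h3 : ∑ t, Pi.single i (1:ℕ) t = 1 := by
    classical
    have : ∀ t, (Pi.single i (1:ℕ) : σ → ℕ) t = if t = i then 1 else 0 := fun t => by by_cases h : t = i <;> simp [h]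
    rw [Finset.sum_congr rfl (fun t _ => this t), Finset.sum_ite_eq' Finset.univ i (fun _ => 1)]
    simp
  rw [h3] at h2
  simpa [degV] using h2

lemma exists_minGen_le {I : Ideal (MvPolynomial σ k)} :
    ∀ D (m : σ → ℕ), degV m ≤ D → monF k m ∈ I → ∃ g ∈ minGens I, ∀ i, g i ≤ m i := by
  intro D
  induction D with
  | zero =>
    intro m hm hmem
    refine ⟨m, ⟨hmem, ?_⟩, fun i => le_rfl⟩
    intro i hi
    have := single_le_degV m i
    omega
  | succ D ih =>
    intro m hm hmem
    by_cases h : ∀ i, 0 < m i → monF k (m - Pi.single i 1) ∉ I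
    · exact ⟨m, ⟨hmem, h⟩, fun i => le_rfl⟩
    · push_neg at h
      obtain ⟨i, hi, hmem'⟩ := h
      have hdeg : degV (m - Pi.single i 1) ≤ D := by
        have := degV_sub_single hi
        omega
      obtain ⟨g, hg, hle⟩ := ih (m - Pi.single i 1) hdeg hmem'
      refine ⟨g, hg, fun j => le_trans (hle j) ?_⟩
      by_cases hj : j = i
      · subst hj; simp [Pi.single_apply]
      · simp [Pi.single_apply, hj]

end Aux1

section Aux2
open Finset
set_option linter.unusedSectionVars false

variable {k : Type*} [Field k] {n : ℕ}

/-- `ℕ`-indexed partial sums of an exponent vector. -/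
def psumN {n : ℕ} (a : Fin n → ℕ) (r : ℕ) : ℕ :=
  ∑ j ∈ Finset.univ.filter (fun j : Fin n => (j : ℕ) < r), a j

lemma psum_eq_psumN (a : Fin n → ℕ) (i : Fin n) : _root_.psum a i = psumN a i := by
  unfold _root_.psum psumN
  apply Finset.sum_congr
  · apply Finset.filter_congr
    intro j _
    exact Fin.lt_def
  · intros; rfl

lemma psumN_zero (a : Fin n → ℕ) : psumN a 0 = 0 := by
  unfold psumN
  rw [Finset.filter_false_of_mem (by intro j _; omega)]
  simp

lemma psumN_succ (a : Fin n → ℕ) {r : ℕ} (h : r < n) :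
    psumN a (r + 1) = psumN a r + a ⟨r, h⟩ := by
  unfold psumN
  have hins : Finset.univ.filter (fun j : Fin n => (j : ℕ) < r + 1)
      = insert ⟨r, h⟩ (Finset.univ.filter (fun j : Fin n => (j : ℕ) < r)) := by
    ext j
    simp only [Finset.mem_filter, Finset.mem_univ, true_and, Finset.mem_insert, Fin.ext_iff]
    omega
  rw [hins, Finset.sum_insert (by simp)]
  omega

lemma psumN_stable (a : Fin n → ℕ) {r : ℕ} (h : n ≤ r) : psumN a r = degV a := by
  unfold psumN degV
  rw [Finset.filter_true_of_mem (by intro j _; have := j.isLt; omega)]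

lemma psumN_mono (a : Fin n → ℕ) {r r' : ℕ} (h : r ≤ r') : psumN a r ≤ psumN a r' := by
  apply Finset.sum_le_sum_of_subset
  intro j hj
  simp only [Finset.mem_filter, Finset.mem_univ, true_and] at hj ⊢
  omega

lemma psumN_le_degV (a : Fin n → ℕ) (r : ℕ) : psumN a r ≤ degV a := by
  calc psumN a r ≤ psumN a (r + n) := psumN_mono a (by omega)
  _ = degV a := psumN_stable a (by omega)

lemma psumN_le_of_le {a b : Fin n → ℕ} (h : ∀ i, a i ≤ b i) (r : ℕ) :
    psumN a r ≤ psumN b r :=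
  Finset.sum_le_sum (fun j _ => h j)

/-- Weighted additive identity for a "Borel move". -/
lemma move_sum_identity {m : Fin n → ℕ} {l j : Fin n} (hml : 0 < m l) (hne : j ≠ l)
    (w : Fin n → ℕ) (S : Finset (Fin n)) :
    (∑ t ∈ S, w t * (m - Pi.single l 1 + Pi.single j 1 : Fin n → ℕ) t)
        + (if l ∈ S then w l else 0)
      = (∑ t ∈ S, w t * m t) + (if j ∈ S then w j else 0) := by
  classical
  have move_apply : ∀ t, (m - Pi.single l 1 + Pi.single j 1 : Fin n → ℕ) t
      = m t - (if t = l then 1 else 0) + (if t = j then 1 else 0) := by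
    intro t
    simp [Pi.single_apply]
  have h1 : ∀ t, w t * (m - Pi.single l 1 + Pi.single j 1 : Fin n → ℕ) t
      + (if t = l then w t else 0) = w t * m t + (if t = j then w t else 0) := by
    intro t
    rw [move_apply]
    rcases eq_or_ne t l with htl | htl
    · subst htl
      rw [if_pos rfl, if_pos rfl, if_neg (fun h : t = j => hne h.symm),
        if_neg (fun h : t = j => hne h.symm)]
      have h3 : m t - 1 + 0 + 1 = m t := by omega
      calc w t * (m t - 1 + 0) + w t = w t * (m t - 1 + 0 + 1) := by ring
      _ = w t * m t + 0 := by rw [h3]; omega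
    · rcases eq_or_ne t j with htj | htj
      · subst htj
        rw [if_pos rfl, if_pos rfl, if_neg htl, if_neg htl]
        have h3 : m t - 0 + 1 = m t + 1 := by omega
        rw [h3]
        ring
      · rw [if_neg htl, if_neg htl, if_neg htj, if_neg htj]
        have h3 : m t - 0 + 0 = m t := by omega
        rw [h3]
  have h2 : ∑ t ∈ S, (w t * (m - Pi.single l 1 + Pi.single j 1 : Fin n → ℕ) t
      + (if t = l then w t else 0))
      = ∑ t ∈ S, (w t * m t + (if t = j then w t else 0)) :=
    Finset.sum_congr rfl (fun t _ => h1 t)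
  rw [Finset.sum_add_distrib, Finset.sum_add_distrib,
    Finset.sum_ite_eq' S l (fun t => w t), Finset.sum_ite_eq' S j (fun t => w t)] at h2
  exact h2

lemma psumN_move {m : Fin n → ℕ} {l j : Fin n} (hml : 0 < m l) (hne : j ≠ l) (r : ℕ) :
    psumN (m - Pi.single l 1 + Pi.single j 1 : Fin n → ℕ) r + (if (l:ℕ) < r then 1 else 0)
      = psumN m r + (if (j:ℕ) < r then 1 else 0) := by
  have := move_sum_identity hml hne (fun _ => 1)
    (Finset.univ.filter (fun j : Fin n => (j : ℕ) < r))
  simp only [one_mul, Finset.mem_filter, Finset.mem_univ, true_and] at this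
  unfold psumN
  exact this

lemma degV_move {m : Fin n → ℕ} {l j : Fin n} (hml : 0 < m l) (hne : j ≠ l) :
    degV (m - Pi.single l 1 + Pi.single j 1 : Fin n → ℕ) = degV m := by
  have := move_sum_identity hml hne (fun _ => 1) Finset.univ
  simp only [one_mul, Finset.mem_univ, if_pos] at this
  unfold degV
  omega

/-- pointwise value of a Borel move. -/
lemma move_apply (m : Fin n → ℕ) (l j i : Fin n) :
    (m - Pi.single l 1 + Pi.single j 1 : Fin n → ℕ) i
      = m i - (if i = l then 1 else 0) + (if i = j then 1 else 0) := by
  simp [Pi.single_apply]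

/-- Borel moves preserve membership for arbitrary monomials of a strongly stable ideal. -/
lemma borel_move {I : Ideal (MvPolynomial (Fin n) k)} (hss : StronglyStable I)
    {m : Fin n → ℕ} (hm : monF k m ∈ I) {l j : Fin n} (hml : 0 < m l) (hjl : j < l) :
    monF k (m - Pi.single l 1 + Pi.single j 1) ∈ I := by
  obtain ⟨g, hg, hle⟩ := exists_minGen_le (degV m) m le_rfl hm
  have hne : j ≠ l := ne_of_lt hjl
  by_cases hgl : g l = m l
  · have hgl0 : 0 < g l := by omega
    have hgmem := hss.2 g hg l j hjl hgl0
    refine monF_mem_of_le (fun i => ?_) hgmem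
    rw [move_apply, move_apply]
    have h := hle i
    omega
  · have hltl : g l < m l := lt_of_le_of_ne (hle l) hgl
    refine monF_mem_of_le (fun i => ?_) hg.1
    rw [move_apply]
    rcases eq_or_ne i l with hil | hil
    · rw [hil, if_pos rfl]
      have h := hltl
      omega
    · rw [if_neg hil]
      have h := hle i
      omega

end Aux2

section Aux3
open Finset
set_option linter.unusedSectionVars false

variable {k : Type*} [Field k] {n : ℕ}

/-- Every monomial of a strongly stable ideal dominates a *b-pol-aligned* minimal
generator. -/
lemma exists_aligned_minGen {I : Ideal (MvPolynomial (Fin n) k)} (hss : StronglyStable I) :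
    ∀ W (m : Fin n → ℕ), monF k m ∈ I →
    (∃ g ∈ minGens I, (∀ i, g i ≤ m i) ∧ (∑ i : Fin n, (i:ℕ) * g i) ≤ W) →
    ∃ g ∈ minGens I, (∀ i, g i ≤ m i) ∧
      ∀ i : Fin n, 0 < g i → psumN g i = psumN m i := by
  intro W
  induction W with
  | zero =>
    rintro m hm ⟨g, hg, hle, hW⟩
    refine ⟨g, hg, hle, fun i hi => ?_⟩
    by_contra hne
    have hlt : psumN g i < psumN m i :=
      lt_of_le_of_ne (psumN_le_of_le hle _) hne
    have hiv : (i : ℕ) * g i = 0 := by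
      have h2 : (i:ℕ) * g i ≤ ∑ t : Fin n, (t:ℕ) * g t :=
        Finset.single_le_sum (f := fun t : Fin n => (t:ℕ) * g t)
          (fun _ _ => Nat.zero_le _) (Finset.mem_univ i)
      omega
    have hiz : (i : ℕ) = 0 := by
      rcases Nat.mul_eq_zero.mp hiv with h | h
      · exact h
      · omega
    have hz : psumN g (i : ℕ) = psumN m (i : ℕ) := by rw [hiz, psumN_zero, psumN_zero]
    omega
  | succ W ih =>
    rintro m hm ⟨g, hg, hle, hW⟩
    by_cases hal : ∀ i : Fin n, 0 < g i → psumN g i = psumN m i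
    · exact ⟨g, hg, hle, hal⟩
    · push_neg at hal
      obtain ⟨i, hgi, hnei⟩ := hal
      have hlt : psumN g i < psumN m i :=
        lt_of_le_of_ne (psumN_le_of_le hle _) hnei
      have hexj : ∃ j : Fin n, (j:ℕ) < (i:ℕ) ∧ g j < m j := by
        by_contra hno
        push_neg at hno
        have hs : psumN m (i:ℕ) ≤ psumN g (i:ℕ) := by
          apply Finset.sum_le_sum
          intro j hj
          simp only [Finset.mem_filter, Finset.mem_univ, true_and] at hj
          exact hno j hj
        omega
      obtain ⟨j, hji, hjlt⟩ := hexj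
      have hjl : j < i := by rwa [Fin.lt_def]
      have hne : j ≠ i := ne_of_lt hjl
      have hgmem := hss.2 g hg i j hjl hgi
      obtain ⟨h, hh, hhle⟩ := exists_minGen_le
        (degV (g - Pi.single i 1 + Pi.single j 1 : Fin n → ℕ))
        (g - Pi.single i 1 + Pi.single j 1 : Fin n → ℕ) le_rfl hgmem
      have hg'le : ∀ t, (g - Pi.single i 1 + Pi.single j 1 : Fin n → ℕ) t ≤ m t := by
        intro t
        rw [move_apply]
        have h1 := hle t
        rcases eq_or_ne t j with htj | htj
        · rw [htj, if_pos rfl]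
          have h2 : g j < m j := hjlt
          omega
        · rw [if_neg htj]
          omega
      have hWid := move_sum_identity hgi hne (fun t : Fin n => (t:ℕ)) Finset.univ
      simp only [Finset.mem_univ, if_pos] at hWid
      apply ih m hm
      refine ⟨h, hh, fun t => le_trans (hhle t) (hg'le t), ?_⟩
      have hWh : (∑ t : Fin n, (t:ℕ) * h t)
          ≤ ∑ t : Fin n, (t:ℕ) * (g - Pi.single i 1 + Pi.single j 1 : Fin n → ℕ) t :=
        Finset.sum_le_sum (fun t _ => Nat.mul_le_mul_left _ (hhle t))
      omega

lemma closure_aligned {I : Ideal (MvPolynomial (Fin n) k)} (hss : StronglyStable I)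
    (m : Fin n → ℕ) (hm : monF k m ∈ I) :
    ∃ g ∈ minGens I, (∀ i, g i ≤ m i) ∧
      ∀ i : Fin n, 0 < g i → psumN g i = psumN m i := by
  obtain ⟨g, hg, hle⟩ := exists_minGen_le (degV m) m le_rfl hm
  exact exists_aligned_minGen hss (∑ i : Fin n, (i:ℕ) * g i) m hm ⟨g, hg, hle, le_rfl⟩

/-- If `m` dominates the partial sums of `u ∈ I` (same degree), then `m ∈ I`. -/
lemma dominate_mem {I : Ideal (MvPolynomial (Fin n) k)} (hss : StronglyStable I) :
    ∀ D (u m : Fin n → ℕ), monF k u ∈ I → degV m = degV u →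
      (∀ r, psumN u r ≤ psumN m r) →
      (∑ r ∈ Finset.range (n+1), (psumN m r - psumN u r)) ≤ D →
      monF k m ∈ I := by
  intro D
  induction D using Nat.strong_induction_on with
  | _ D ih =>
  intro u m hu hdeg hps hD
  by_cases hall : ∀ r, r ≤ n → psumN m r = psumN u r
  · have hmu : m = u := by
      funext t
      have h1 := psumN_succ m t.isLt
      have h2 := psumN_succ u t.isLt
      have h3 := hall (t:ℕ) (by omega)
      have h4 := hall ((t:ℕ)+1) (by have := t.isLt; omega)
      have h5 : (⟨(t:ℕ), t.isLt⟩ : Fin n) = t := rfl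
      rw [h5] at h1 h2
      omega
    rwa [hmu]
  · push_neg at hall
    obtain ⟨r0, hr0n, hr0⟩ := hall
    have hex : ∃ r, psumN u r < psumN m r :=
      ⟨r0, lt_of_le_of_ne (hps r0) (fun h => hr0 h.symm)⟩
    classical
    obtain ⟨rstar, hstar, hstarmin⟩ :
        ∃ rs, psumN u rs < psumN m rs ∧ ∀ r < rs, ¬ psumN u r < psumN m r :=
      ⟨Nat.find hex, Nat.find_spec hex, fun r hr => Nat.find_min hex hr⟩
    have hrs1 : 1 ≤ rstar := by
      rcases Nat.eq_zero_or_pos rstar with h | h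
      · rw [h, psumN_zero, psumN_zero] at hstar; omega
      · exact h
    have hrsn : rstar < n := by
      by_contra hcon
      push_neg at hcon
      rw [psumN_stable u hcon, psumN_stable m hcon] at hstar
      omega
    have hn1 : 1 ≤ n := by omega
    have hwitL : rstar ≤ n-1 ∧ psumN m ((n-1)+1) ≤ psumN u ((n-1)+1) := by
      constructor
      · omega
      · have h1 : n - 1 + 1 = n := by omega
        rw [h1, psumN_stable u (le_refl n), psumN_stable m (le_refl n)]
        omega
    have hexL : ∃ L, rstar ≤ L ∧ psumN m (L+1) ≤ psumN u (L+1) := ⟨n-1, hwitL⟩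
    obtain ⟨L, ⟨hLrs, hLspec⟩, hLmin, hLle⟩ :
        ∃ L, (rstar ≤ L ∧ psumN m (L+1) ≤ psumN u (L+1))
          ∧ (∀ r < L, ¬(rstar ≤ r ∧ psumN m (r+1) ≤ psumN u (r+1))) ∧ L ≤ n-1 :=
      ⟨Nat.find hexL, Nat.find_spec hexL, fun r hr => Nat.find_min hexL hr,
        Nat.find_le hwitL⟩
    have hLn : L < n := by omega
    have hLmin' : ∀ r, rstar ≤ r → r < L → psumN u (r+1) < psumN m (r+1) := by
      intro r h1 h2
      have h3 := hLmin r h2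
      have h4 := hps (r+1)
      omega
    have hstrictL : psumN u L < psumN m L := by
      rcases eq_or_lt_of_le hLrs with h | h
      · rw [← h]; exact hstar
      · have h2 := hLmin' (L-1) (by omega) (by omega)
        have h3 : L - 1 + 1 = L := by omega
        rw [h3] at h2
        exact h2
    have hul : 0 < u ⟨L, hLn⟩ := by
      have h1 := psumN_succ u hLn
      have h2 : psumN m L ≤ psumN m (L+1) := psumN_mono m (by omega)
      omega
    have hjfb : rstar - 1 < n := by omega
    have hjlf : (⟨rstar - 1, hjfb⟩ : Fin n) < ⟨L, hLn⟩ := by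
      rw [Fin.lt_def]
      simp only
      omega
    have hnejl : (⟨rstar - 1, hjfb⟩ : Fin n) ≠ ⟨L, hLn⟩ := ne_of_lt hjlf
    have hu'mem : monF k
        (u - Pi.single (⟨L, hLn⟩ : Fin n) 1 + Pi.single (⟨rstar - 1, hjfb⟩ : Fin n) 1) ∈ I :=
      borel_move hss hu hul hjlf
    set u' : Fin n → ℕ :=
      u - Pi.single (⟨L, hLn⟩ : Fin n) 1 + Pi.single (⟨rstar - 1, hjfb⟩ : Fin n) 1 with hu'
    have hps' : ∀ r, psumN u' r + (if L < r then 1 else 0)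
        = psumN u r + (if rstar - 1 < r then 1 else 0) := by
      intro r
      have h0 := psumN_move hul hnejl (m := u) r
      simpa using h0
    have hdom' : ∀ r, psumN u' r ≤ psumN m r := by
      intro r
      have h1 := hps' r
      by_cases hc1 : r ≤ rstar - 1
      · rw [if_neg (show ¬ L < r by omega), if_neg (show ¬ rstar - 1 < r by omega)] at h1
        have := hps r
        omega
      · by_cases hc2 : r ≤ L
        · rw [if_neg (show ¬ L < r by omega), if_pos (show rstar - 1 < r by omega)] at h1
          have hstrict : psumN u r < psumN m r := by
            rcases eq_or_lt_of_le (show rstar ≤ r by omega) with h | h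
            · rw [← h]; exact hstar
            · have h2 := hLmin' (r-1) (by omega) (by omega)
              have h3 : r - 1 + 1 = r := by omega
              rw [h3] at h2
              exact h2
          omega
        · rw [if_pos (show L < r by omega), if_pos (show rstar - 1 < r by omega)] at h1
          have := hps r
          omega
    have hdeg' : degV m = degV u' := by
      rw [hdeg, hu', degV_move hul hnejl]
    have hmeas : (∑ r ∈ Finset.range (n+1), (psumN m r - psumN u' r))
        < ∑ r ∈ Finset.range (n+1), (psumN m r - psumN u r) := by
      apply Finset.sum_lt_sum
      · intro r _
        have h1 := hps' r
        have h2 := hdom' r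
        have h3 := hps r
        by_cases hc : L < r
        · rw [if_pos hc] at h1
          by_cases hc2 : rstar - 1 < r
          · rw [if_pos hc2] at h1; omega
          · rw [if_neg hc2] at h1; omega
        · rw [if_neg hc] at h1
          by_cases hc2 : rstar - 1 < r
          · rw [if_pos hc2] at h1; omega
          · rw [if_neg hc2] at h1; omega
      · refine ⟨rstar, Finset.mem_range.mpr (by omega), ?_⟩
        have h1 := hps' rstar
        rw [if_neg (show ¬ L < rstar by omega), if_pos (show rstar - 1 < rstar by omega)] at h1
        have h2 := hdom' rstar
        omega
    exact ih _ (lt_of_lt_of_le hmeas hD) u' m hu'mem hdeg' hdom' le_rfl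

end Aux3

section Aux4
open Finset
set_option linter.unusedSectionVars false

variable {k : Type*} [Field k] {n d N : ℕ}

lemma bpolExp_ne_zero_iff (a : Fin n → ℕ) (p : Fin n × Fin d) :
    bpolExp d a p ≠ 0 ↔
      (psumN a (p.1:ℕ) ≤ (p.2:ℕ) ∧ (p.2:ℕ) < psumN a (p.1:ℕ) + a p.1) := by
  unfold bpolExp
  simp only [psum_eq_psumN]
  split_ifs with h
  · exact iff_of_true one_ne_zero h
  · exact iff_of_false (by simp) h

lemma bpolExp_le_one (a : Fin n → ℕ) (p : Fin n × Fin d) : bpolExp d a p ≤ 1 := by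
  unfold bpolExp
  split_ifs <;> omega

lemma sigmaExp_ne_zero_iff (a : Fin n → ℕ) (q : Fin N) :
    sigmaExp N a q ≠ 0 ↔
      ∃ i : Fin n, (i:ℕ) + psumN a (i:ℕ) ≤ (q:ℕ) ∧ (q:ℕ) < (i:ℕ) + psumN a (i:ℕ) + a i := by
  unfold sigmaExp
  simp only [psum_eq_psumN]
  split_ifs with h
  · exact iff_of_true one_ne_zero h
  · exact iff_of_false (by simp) h

lemma sigmaExp_le_one (a : Fin n → ℕ) (q : Fin N) : sigmaExp N a q ≤ 1 := by
  unfold sigmaExp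
  split_ifs <;> omega

lemma sigmaExp_le_of_aligned {g m : Fin n → ℕ} (hle : ∀ i, g i ≤ m i)
    (hal : ∀ i : Fin n, 0 < g i → psumN g (i:ℕ) = psumN m (i:ℕ)) (q : Fin N)
    (hq : sigmaExp N g q ≠ 0) : sigmaExp N m q ≠ 0 := by
  rw [sigmaExp_ne_zero_iff] at hq ⊢
  obtain ⟨i, h1, h2⟩ := hq
  have hgi : 0 < g i := by omega
  have h3 := hal i hgi
  have h4 := hle i
  exact ⟨i, by omega, by omega⟩

lemma mem_span_exp {σ' : Type*} [Fintype σ'] {G : Set (Fin n → ℕ)}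
    {F : (Fin n → ℕ) → σ' → ℕ} {f : MvPolynomial σ' k} :
    f ∈ Ideal.span {q : MvPolynomial σ' k | ∃ a ∈ G, q = monF k (F a)}
      ↔ ∀ b ∈ f.support, ∃ a ∈ G, ∀ i, F a i ≤ b i := by
  have hset : {q : MvPolynomial σ' k | ∃ a ∈ G, q = monF k (F a)} = (monF k) '' (F '' G) := by
    ext q
    simp only [Set.mem_setOf_eq, Set.mem_image]
    constructor
    · rintro ⟨a, ha, rfl⟩
      exact ⟨F a, ⟨a, ha, rfl⟩, rfl⟩
    · rintro ⟨c, ⟨a, ha, rfl⟩, rfl⟩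
      exact ⟨a, ha, rfl⟩
  rw [hset, mem_span_monF]
  constructor
  · intro h b hb
    obtain ⟨c, ⟨a, ha, rfl⟩, hle⟩ := h b hb
    exact ⟨a, ha, hle⟩
  · intro h b hb
    obtain ⟨a, ha, hle⟩ := h b hb
    exact ⟨F a, ⟨a, ha, rfl⟩, hle⟩

lemma monF_mem_span_exp {σ' : Type*} [Fintype σ'] {G : Set (Fin n → ℕ)}
    {F : (Fin n → ℕ) → σ' → ℕ} {b : σ' → ℕ} :
    monF k b ∈ Ideal.span {q : MvPolynomial σ' k | ∃ a ∈ G, q = monF k (F a)}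
      ↔ ∃ a ∈ G, ∀ i, F a i ≤ b i := by
  rw [mem_span_exp]
  constructor
  · intro h
    have := h _ (by rw [support_monF]; exact Finset.mem_singleton_self _)
    simpa [symm_apply] using this
  · intro h c hc
    rw [support_monF, Finset.mem_singleton] at hc
    subst hc
    simpa [symm_apply] using h

/-- sum identity for a `kk`-fold shift between two coordinates. -/
lemma shift_sum_identity (a : Fin n → ℕ) (ci ci1 : Fin n) (kk : ℕ)
    (hk : kk ≤ a ci1) (hne : ci ≠ ci1) (S : Finset (Fin n)) :
    (∑ w ∈ S, (a w + (if w = ci then kk else 0) - (if w = ci1 then kk else 0)))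
        + (if ci1 ∈ S then kk else 0)
      = (∑ w ∈ S, a w) + (if ci ∈ S then kk else 0) := by
  classical
  have h1 : ∀ w, (a w + (if w = ci then kk else 0) - (if w = ci1 then kk else 0))
      + (if w = ci1 then kk else 0) = a w + (if w = ci then kk else 0) := by
    intro w
    rcases eq_or_ne w ci1 with h | h
    · subst h
      rw [if_pos (rfl : w = w)]
      omega
    · rw [if_neg h]
      omega
  have h2 : ∑ w ∈ S, ((a w + (if w = ci then kk else 0) - (if w = ci1 then kk else 0))
      + (if w = ci1 then kk else 0))
      = ∑ w ∈ S, (a w + (if w = ci then kk else 0)) :=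
    Finset.sum_congr rfl (fun w _ => h1 w)
  rw [Finset.sum_add_distrib, Finset.sum_add_distrib,
    Finset.sum_ite_eq' S ci1 (fun _ => kk), Finset.sum_ite_eq' S ci (fun _ => kk)] at h2
  exact h2

/-- strictly order-preserving maps between `Fin`s grow values. -/
lemma finmap_le_apply {a b : ℕ} (f : Fin a → Fin b)
    (hf : ∀ i j : Fin a, i < j → f i < f j) :
    ∀ (v : ℕ) (i : Fin a), (i:ℕ) = v → v ≤ (f i : ℕ) := by
  intro v
  induction v with
  | zero => intro i _; omega
  | succ v ih =>
    intro i hi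
    have hb : v < a := by have := i.isLt; omega
    have h2 := ih ⟨v, hb⟩ rfl
    have hvv : ((⟨v, hb⟩ : Fin a) : ℕ) = v := rfl
    have h3 := hf ⟨v, hb⟩ i (by rw [Fin.lt_def, hvv]; omega)
    rw [Fin.lt_def] at h3
    omega

end Aux4

/-- If the irredundant irreducible decomposition of `b-pol(I)` of a
strongly stable ideal `I` is `⋂_{s=1}^r (x_{i,γ_i^s} : 1 ≤ i ≤ t_s)`, then
`I^σ = ⋂_{s=1}^r (x_{γ_i^s + i - 1} : 1 ≤ i ≤ t_s)` is the irredundant irreducible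
decomposition of `I^σ ⊆ T = k[x_1,…,x_N]`. -/
theorem sigmaIdeal_irreducible_decomposition {n d N : ℕ} {k : Type*} [Field k]
    (I : Ideal (MvPolynomial (Fin n) k)) (hss : StronglyStable I) (hd : GensDegLE I d)
    (hN : n + d ≤ N + 1)
    (r : ℕ) (t : Fin r → ℕ) (ht : ∀ s, t s ≤ n) (γ : (s : Fin r) → Fin (t s) → Fin d)
    (P : Fin r → Ideal (MvPolynomial (Fin n × Fin d) k))
    (hP : ∀ s, P s = varIdeal k {p : Fin n × Fin d |
      ∃ i : Fin (t s), p = (Fin.castLE (ht s) i, γ s i)})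
    (hdec : bpolIdeal d I = ⨅ s, P s)
    (hirr : ∀ s : Fin r, ¬ (⨅ s' ∈ Finset.univ.erase s, P s') ≤ P s)
    (Q : Fin r → Ideal (MvPolynomial (Fin N) k))
    (hQ : ∀ s, Q s = varIdeal k {q : Fin N |
      ∃ i : Fin (t s), (q : ℕ) = (γ s i : ℕ) + (i : ℕ)}) :
    sigmaIdeal N I = (⨅ s, Q s) ∧
      ∀ s : Fin r, ¬ (⨅ s' ∈ Finset.univ.erase s, Q s') ≤ Q s := by
  classical
  -- `⨅` over the erased finset is below each of its members
  have hbi : ∀ s s'' : Fin r, s'' ≠ s →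
      (⨅ s' ∈ Finset.univ.erase s, P s') ≤ P s'' := by
    intro s s'' h
    refine iInf_le_of_le s'' ?_
    exact iInf_le_of_le (Finset.mem_erase.mpr ⟨h, Finset.mem_univ _⟩) le_rfl
  have hbple : ∀ s, bpolIdeal d I ≤ P s := by
    intro s; rw [hdec]; exact iInf_le _ s
  have hgenb : ∀ a ∈ minGens I, monF k (bpolExp d a) ∈ bpolIdeal d I :=
    fun a ha => Ideal.subset_span ⟨a, ha, rfl⟩
  -- covering of minimal generators, ℕ-valued form
  have hCov1 : ∀ a ∈ minGens I, ∀ s : Fin r, ∃ i : Fin (t s),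
      psumN a (i:ℕ) ≤ (γ s i : ℕ) ∧
        (γ s i:ℕ) < psumN a (i:ℕ) + a ⟨(i:ℕ), lt_of_lt_of_le i.isLt (ht s)⟩ := by
    intro a ha s
    have h1 := hbple s (hgenb a ha)
    rw [hP, monF_mem_varIdeal] at h1
    obtain ⟨p, hp, hpne⟩ := h1
    obtain ⟨i, rfl⟩ := hp
    rw [bpolExp_ne_zero_iff] at hpne
    exact ⟨i, hpne⟩
  -- coverage of every monomial of I
  have hCovAll : ∀ (m : Fin n → ℕ), monF k m ∈ I → ∀ s : Fin r, ∃ i : Fin (t s),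
      psumN m (i:ℕ) ≤ (γ s i : ℕ) ∧
        (γ s i:ℕ) < psumN m (i:ℕ) + m ⟨(i:ℕ), lt_of_lt_of_le i.isLt (ht s)⟩ := by
    intro m hm s
    obtain ⟨g, hg, hgle, hgal⟩ := closure_aligned hss m hm
    obtain ⟨i, hi1, hi2⟩ := hCov1 g hg s
    have hgpos : 0 < g ⟨(i:ℕ), lt_of_lt_of_le i.isLt (ht s)⟩ := by omega
    have hal := hgal _ hgpos
    have hle2 := hgle ⟨(i:ℕ), lt_of_lt_of_le i.isLt (ht s)⟩
    have hvv : ((⟨(i:ℕ), lt_of_lt_of_le i.isLt (ht s)⟩ : Fin n) : ℕ) = (i:ℕ) := rfl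
    rw [hvv] at hal
    exact ⟨i, by omega, by omega⟩
  -- minimality witnesses
  have hwitness : ∀ (s : Fin r) (i0 : Fin (t s)), ∃ g ∈ minGens I,
      (psumN g (i0:ℕ) ≤ (γ s i0:ℕ) ∧
        (γ s i0:ℕ) < psumN g (i0:ℕ) + g ⟨(i0:ℕ), lt_of_lt_of_le i0.isLt (ht s)⟩) ∧
      ∀ i : Fin (t s), i ≠ i0 →
        ¬(psumN g (i:ℕ) ≤ (γ s i:ℕ) ∧
          (γ s i:ℕ) < psumN g (i:ℕ) + g ⟨(i:ℕ), lt_of_lt_of_le i.isLt (ht s)⟩) := by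
    intro s i0
    have hnole : ¬ (bpolIdeal d I ≤ varIdeal k
        {p : Fin n × Fin d | ∃ i : Fin (t s), i ≠ i0 ∧ p = (Fin.castLE (ht s) i, γ s i)}) := by
      intro hle2
      by_cases hex : ∃ s'' : Fin r,
          {p : Fin n × Fin d | ∃ i : Fin (t s''), p = (Fin.castLE (ht s'') i, γ s'' i)} ⊆
          {p : Fin n × Fin d | ∃ i : Fin (t s), i ≠ i0 ∧ p = (Fin.castLE (ht s) i, γ s i)}
      · obtain ⟨s'', hs''⟩ := hex
        have hPle : P s'' ≤ P s := by
          rw [hP, hP]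
          apply varIdeal_mono
          intro p hp
          obtain ⟨i, _, hpe⟩ := hs'' hp
          exact ⟨i, hpe⟩
        rcases eq_or_ne s'' s with hE | hE
        · subst hE
          obtain ⟨i, hine, hpe⟩ := hs'' ⟨i0, rfl⟩
          have h1 : Fin.castLE (ht s'') i0 = Fin.castLE (ht s'') i := congrArg Prod.fst hpe
          have h2 : (i0:ℕ) = (i:ℕ) := congrArg (Fin.val : Fin n → ℕ) h1
          exact hine (Fin.ext h2.symm)
        · exact hirr s (le_trans (hbi s s'' hE) hPle)
      · push_neg at hex
        have hex2 : ∀ s'' : Fin r, ∃ p : Fin n × Fin d,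
            (∃ i : Fin (t s''), p = (Fin.castLE (ht s'') i, γ s'' i)) ∧
            ¬(∃ i : Fin (t s), i ≠ i0 ∧ p = (Fin.castLE (ht s) i, γ s i)) := by
          intro s''
          have h3 := hex s''
          rw [Set.not_subset] at h3
          obtain ⟨p, hp1, hp2⟩ := h3
          exact ⟨p, hp1, hp2⟩
        set cexp : Fin n × Fin d → ℕ := fun p =>
          if (∃ s'' : Fin r, (∃ i : Fin (t s''), p = (Fin.castLE (ht s'') i, γ s'' i)) ∧
              ¬(∃ i : Fin (t s), i ≠ i0 ∧ p = (Fin.castLE (ht s) i, γ s i))) then 1 else 0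
          with hcexp
        have hcP : ∀ s'' : Fin r, monF k cexp ∈ P s'' := by
          intro s''
          rw [hP, monF_mem_varIdeal]
          obtain ⟨p, hp1, hp2⟩ := hex2 s''
          refine ⟨p, hp1, ?_⟩
          rw [hcexp]
          simp only
          rw [if_pos ⟨s'', hp1, hp2⟩]
          omega
        have hcb : monF k cexp ∈ bpolIdeal d I := by
          rw [hdec]
          exact Ideal.mem_iInf.mpr hcP
        have hfin := hle2 hcb
        rw [monF_mem_varIdeal] at hfin
        obtain ⟨p, hp1, hp2⟩ := hfin
        rw [hcexp] at hp2
        simp only at hp2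
        by_cases hcnd : ∃ s'' : Fin r,
            (∃ i : Fin (t s''), p = (Fin.castLE (ht s'') i, γ s'' i)) ∧
            ¬(∃ i : Fin (t s), i ≠ i0 ∧ p = (Fin.castLE (ht s) i, γ s i))
        · obtain ⟨s'', _, hns⟩ := hcnd
          exact hns hp1
        · rw [if_neg hcnd] at hp2
          exact hp2 rfl
    have hexg : ∃ g ∈ minGens I, monF k (bpolExp d g) ∉ varIdeal k
        {p : Fin n × Fin d | ∃ i : Fin (t s), i ≠ i0 ∧ p = (Fin.castLE (ht s) i, γ s i)} := by
      by_contra hcon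
      push_neg at hcon
      apply hnole
      refine Ideal.span_le.mpr ?_
      rintro q ⟨a, ha, rfl⟩
      exact hcon a ha
    obtain ⟨g, hgmin, hgnot⟩ := hexg
    rw [monF_mem_varIdeal] at hgnot
    push_neg at hgnot
    refine ⟨g, hgmin, ?_, ?_⟩
    · obtain ⟨i, hi⟩ := hCov1 g hgmin s
      rcases eq_or_ne i i0 with rfl | hne
      · exact hi
      · exfalso
        have hz := hgnot (Fin.castLE (ht s) i, γ s i) ⟨i, hne, rfl⟩
        exact (bpolExp_ne_zero_iff g (Fin.castLE (ht s) i, γ s i)).mpr hi hz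
    · intro i hne hcontra
      have hz := hgnot (Fin.castLE (ht s) i, γ s i) ⟨i, hne, rfl⟩
      exact (bpolExp_ne_zero_iff g (Fin.castLE (ht s) i, γ s i)).mpr hcontra hz
  -- monotonicity of γ along each component (consecutive step)
  have hmonoc : ∀ (s : Fin r) (jv : ℕ) (h' : jv < t s) (h : jv + 1 < t s),
      (γ s ⟨jv, h'⟩ : ℕ) ≤ (γ s ⟨jv+1, h⟩ : ℕ) := by
    intro s jv h' h
    obtain ⟨a, hamin, hacov0, hazero⟩ := hwitness s ⟨jv+1, h⟩
    set ci : Fin n := ⟨jv, lt_of_lt_of_le h' (ht s)⟩ with hcidef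
    set ci1 : Fin n := ⟨jv+1, lt_of_lt_of_le h (ht s)⟩ with hci1def
    have hacov : psumN a (jv+1) ≤ (γ s ⟨jv+1, h⟩:ℕ) ∧
        (γ s ⟨jv+1, h⟩:ℕ) < psumN a (jv+1) + a ci1 := hacov0
    have hlt : ci < ci1 := by
      rw [Fin.lt_def]
      show jv < jv + 1
      omega
    have hne : ci ≠ ci1 := ne_of_lt hlt
    set kk : ℕ := (γ s ⟨jv+1, h⟩:ℕ) + 1 - psumN a (jv+1) with hkkdef
    have hkkle : kk ≤ a ci1 := by omega
    have hshift : ∀ l : ℕ, l ≤ kk →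
        monF k (fun w => a w + (if w = ci then l else 0) - (if w = ci1 then l else 0)) ∈ I := by
      intro l
      induction l with
      | zero =>
        intro _
        have he : (fun w => a w + (if w = ci then 0 else 0) - (if w = ci1 then 0 else 0)) = a := by
          funext w
          split_ifs <;> omega
        rw [he]
        exact hamin.1
      | succ l ih =>
        intro hl
        have hm := ih (by omega)
        have hpos : 0 < (fun w => a w + (if w = ci then l else 0)
            - (if w = ci1 then l else 0)) ci1 := by
          show 0 < a ci1 + (if ci1 = ci then l else 0) - (if ci1 = ci1 then l else 0)
          rw [if_neg (fun hc : ci1 = ci => hne hc.symm), if_pos rfl]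
          omega
        have hmem := borel_move hss hm hpos hlt
        have he2 : ((fun w => a w + (if w = ci then l else 0) - (if w = ci1 then l else 0))
            - Pi.single ci1 1 + Pi.single ci 1 : Fin n → ℕ)
            = fun w => a w + (if w = ci then l+1 else 0) - (if w = ci1 then l+1 else 0) := by
          funext w
          rw [move_apply]
          by_cases h1 : w = ci <;> by_cases h2 : w = ci1
          · exact absurd (h1.symm.trans h2) hne
          · simp only [if_pos h1, if_neg h2] <;> omega
          · simp only [if_neg h1, if_pos h2] <;> omega
          · simp only [if_neg h1, if_neg h2] <;> omega
        rwa [he2] at hmem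
    have hmmem := hshift kk le_rfl
    have hpsid : ∀ rr, psumN (fun w => a w + (if w = ci then kk else 0)
          - (if w = ci1 then kk else 0)) rr
        + (if jv + 1 < rr then kk else 0) = psumN a rr + (if jv < rr then kk else 0) := by
      intro rr
      have h0 := shift_sum_identity a ci ci1 kk hkkle (fun hc : ci = ci1 => hne hc)
        (Finset.univ.filter (fun w : Fin n => (w:ℕ) < rr))
      have hm1 : ci1 ∈ Finset.univ.filter (fun w : Fin n => (w:ℕ) < rr) ↔ jv + 1 < rr := by
        simp only [Finset.mem_filter, Finset.mem_univ, true_and] <;> exact Iff.rfl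
      have hm2 : ci ∈ Finset.univ.filter (fun w : Fin n => (w:ℕ) < rr) ↔ jv < rr := by
        simp only [Finset.mem_filter, Finset.mem_univ, true_and] <;> exact Iff.rfl
      rw [if_congr hm1 rfl rfl, if_congr hm2 rfl rfl] at h0
      exact h0
    set m : Fin n → ℕ := fun w => a w + (if w = ci then kk else 0) - (if w = ci1 then kk else 0)
      with hmdef
    obtain ⟨i2, hc1, hc2⟩ := hCovAll m hmmem s
    rcases Nat.lt_trichotomy (i2:ℕ) (jv+1) with hcmp | hcmp | hcmp
    · rcases Nat.lt_trichotomy (i2:ℕ) jv with hcmp2 | hcmp2 | hcmp2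
      · exfalso
        have hne2 : i2 ≠ ⟨jv+1, h⟩ := by
          intro hE
          have h3 : (i2:ℕ) = jv + 1 := congrArg Fin.val hE
          omega
        have hz := hazero i2 hne2
        apply hz
        have hp := hpsid (i2:ℕ)
        rw [if_neg (by omega), if_neg (by omega)] at hp
        have hval : m ⟨(i2:ℕ), lt_of_lt_of_le i2.isLt (ht s)⟩
            = a ⟨(i2:ℕ), lt_of_lt_of_le i2.isLt (ht s)⟩ := by
          show a ⟨(i2:ℕ), lt_of_lt_of_le i2.isLt (ht s)⟩
              + (if (⟨(i2:ℕ), lt_of_lt_of_le i2.isLt (ht s)⟩ : Fin n) = ci then kk else 0)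
              - (if (⟨(i2:ℕ), lt_of_lt_of_le i2.isLt (ht s)⟩ : Fin n) = ci1 then kk else 0)
              = a ⟨(i2:ℕ), lt_of_lt_of_le i2.isLt (ht s)⟩
          rw [if_neg (by intro hE; have h3 : (i2:ℕ) = jv := congrArg Fin.val hE; omega),
            if_neg (by intro hE; have h3 : (i2:ℕ) = jv + 1 := congrArg Fin.val hE; omega)]
          omega
        rw [hval] at hc2
        exact ⟨by omega, by omega⟩
      · -- the main case
        have hi2eq : i2 = ⟨jv, h'⟩ := Fin.ext hcmp2
        subst hi2eq
        have hc1' : psumN m jv ≤ (γ s ⟨jv, h'⟩:ℕ) := hc1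
        have hc2' : (γ s ⟨jv, h'⟩:ℕ) < psumN m jv + m ci := hc2
        have hval : m ci = a ci + kk := by
          show a ci + (if ci = ci then kk else 0) - (if ci = ci1 then kk else 0) = a ci + kk
          rw [if_pos rfl, if_neg hne]
          omega
        rw [hval] at hc2'
        have hp := hpsid jv
        rw [if_neg (by omega), if_neg (by omega)] at hp
        have hz0 := hazero ⟨jv, h'⟩ (by
          intro hE
          have h3 : jv = jv + 1 := congrArg Fin.val hE
          omega)
        have hz : ¬(psumN a jv ≤ (γ s ⟨jv, h'⟩:ℕ) ∧
            (γ s ⟨jv, h'⟩:ℕ) < psumN a jv + a ci) := hz0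
        have hz2 : psumN a jv + a ci ≤ (γ s ⟨jv, h'⟩:ℕ) := by
          by_contra hcc
          push_neg at hcc
          exact hz ⟨by omega, by omega⟩
        have hsucc : psumN a (jv+1) = psumN a jv + a ci :=
          psumN_succ a (lt_of_lt_of_le h' (ht s))
        omega
      · omega
    · exfalso
      have hi2eq : i2 = ⟨jv+1, h⟩ := Fin.ext hcmp
      subst hi2eq
      have hc1' : psumN m (jv+1) ≤ (γ s ⟨jv+1, h⟩:ℕ) := hc1
      have hp := hpsid (jv+1)
      rw [if_neg (by omega), if_pos (by omega)] at hp
      omega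
    · exfalso
      have hne2 : i2 ≠ ⟨jv+1, h⟩ := by
        intro hE
        have h3 : (i2:ℕ) = jv + 1 := congrArg Fin.val hE
        omega
      have hz := hazero i2 hne2
      apply hz
      have hp := hpsid (i2:ℕ)
      rw [if_pos (by omega), if_pos (by omega)] at hp
      have hval : m ⟨(i2:ℕ), lt_of_lt_of_le i2.isLt (ht s)⟩
          = a ⟨(i2:ℕ), lt_of_lt_of_le i2.isLt (ht s)⟩ := by
        show a ⟨(i2:ℕ), lt_of_lt_of_le i2.isLt (ht s)⟩
            + (if (⟨(i2:ℕ), lt_of_lt_of_le i2.isLt (ht s)⟩ : Fin n) = ci then kk else 0)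
            - (if (⟨(i2:ℕ), lt_of_lt_of_le i2.isLt (ht s)⟩ : Fin n) = ci1 then kk else 0)
            = a ⟨(i2:ℕ), lt_of_lt_of_le i2.isLt (ht s)⟩
        rw [if_neg (by intro hE; have h3 : (i2:ℕ) = jv := congrArg Fin.val hE; omega),
          if_neg (by intro hE; have h3 : (i2:ℕ) = jv + 1 := congrArg Fin.val hE; omega)]
        omega
      rw [hval] at hc2
      exact ⟨by omega, by omega⟩
  -- monotonicity, general
  have hmono : ∀ (s : Fin r) (v1 v2 : ℕ) (h1 : v1 < t s) (h2 : v2 < t s), v1 ≤ v2 →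
      (γ s ⟨v1, h1⟩ : ℕ) ≤ (γ s ⟨v2, h2⟩ : ℕ) := by
    intro s v1 v2
    induction v2 with
    | zero =>
      intro h1 h2 hle
      have hv : v1 = 0 := by omega
      subst hv
      exact le_rfl
    | succ v2 ih =>
      intro h1 h2 hle
      rcases eq_or_lt_of_le hle with h | h
      · subst h; exact le_rfl
      · have hv2 : v2 < t s := by omega
        have hih := ih h1 hv2 (by omega)
        have hc := hmonoc s v2 hv2 h2
        omega
  -- value bound for σ-variables
  have hqbound : ∀ (s : Fin r) (i : Fin (t s)), (γ s i:ℕ) + (i:ℕ) < N := by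
    intro s i
    have h1 := (γ s i).isLt
    have h2 := lt_of_lt_of_le i.isLt (ht s)
    omega
  -- part 1, ≤ : each σ-generator lies in every Q s
  have hsigma_le : ∀ a ∈ minGens I, ∀ s : Fin r, monF k (sigmaExp N a) ∈ Q s := by
    intro a ha s
    rw [hQ, monF_mem_varIdeal]
    obtain ⟨i, hi1, hi2⟩ := hCov1 a ha s
    refine ⟨⟨(γ s i:ℕ) + (i:ℕ), hqbound s i⟩, ⟨i, rfl⟩, ?_⟩
    rw [ne_eq, ← ne_eq, sigmaExp_ne_zero_iff]
    refine ⟨⟨(i:ℕ), lt_of_lt_of_le i.isLt (ht s)⟩, ?_, ?_⟩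
    · show (i:ℕ) + psumN a (i:ℕ) ≤ (γ s i:ℕ) + (i:ℕ)
      omega
    · show (γ s i:ℕ) + (i:ℕ) < (i:ℕ) + psumN a (i:ℕ) + a ⟨(i:ℕ), lt_of_lt_of_le i.isLt (ht s)⟩
      omega
  -- part 1 : the decomposition
  have hpart1 : sigmaIdeal N I = ⨅ s, Q s := by
    apply le_antisymm
    · refine Ideal.span_le.mpr ?_
      rintro q0 ⟨a, ha, rfl⟩
      rw [SetLike.mem_coe, Ideal.mem_iInf]
      exact fun s => hsigma_le a ha s
    · intro f hf
      have hf' : ∀ s, f ∈ Q s := Ideal.mem_iInf.mp hf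
      have hgoal : f ∈ Ideal.span {q : MvPolynomial (Fin N) k |
          ∃ a ∈ minGens I, q = monF k (sigmaExp N a)} := by
        refine (mem_span_exp (G := minGens I) (F := fun a => sigmaExp N a)).mpr ?_
        intro b hb
        have hpd : ∀ p : Fin n × Fin d, (p.1:ℕ) + (p.2:ℕ) < N := by
          intro p
          have h1 := p.1.isLt
          have h2 := p.2.isLt
          omega
        set cexp : Fin n × Fin d → ℕ := fun p => b ⟨(p.1:ℕ) + (p.2:ℕ), hpd p⟩ with hcdef
        have hcP : ∀ s : Fin r, monF k cexp ∈ P s := by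
          intro s
          rw [hP, monF_mem_varIdeal]
          have hfq := hf' s
          rw [hQ, mem_varIdeal] at hfq
          obtain ⟨q, hq1, hq2⟩ := hfq b hb
          obtain ⟨i, hqv⟩ := hq1
          refine ⟨(Fin.castLE (ht s) i, γ s i), ⟨i, rfl⟩, ?_⟩
          have hqq : (⟨((Fin.castLE (ht s) i : Fin n):ℕ) + ((γ s i : Fin d):ℕ),
              hpd (Fin.castLE (ht s) i, γ s i)⟩ : Fin N) = q := by
            apply Fin.ext
            show (i:ℕ) + (γ s i:ℕ) = (q:ℕ)
            omega
          show b ⟨((Fin.castLE (ht s) i : Fin n):ℕ) + ((γ s i : Fin d):ℕ),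
              hpd (Fin.castLE (ht s) i, γ s i)⟩ ≠ 0
          rw [hqq]
          exact hq2
        have hcb : monF k cexp ∈ bpolIdeal d I := by
          rw [hdec]
          exact Ideal.mem_iInf.mpr hcP
        have hcb' : monF k cexp ∈ Ideal.span {q : MvPolynomial (Fin n × Fin d) k |
            ∃ a ∈ minGens I, q = monF k (bpolExp d a)} := hcb
        obtain ⟨a, ha, hle⟩ :=
          (monF_mem_span_exp (G := minGens I) (F := fun a => bpolExp d a)).mp hcb'
        refine ⟨a, ha, ?_⟩
        intro q
        by_cases hz : sigmaExp N a q = 0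
        · rw [hz]; exact Nat.zero_le _
        · obtain ⟨i, hi1, hi2⟩ := (sigmaExp_ne_zero_iff a q).mp hz
          have hjd : (q:ℕ) - (i:ℕ) < d := by
            have h2 : psumN a ((i:ℕ)+1) = psumN a (i:ℕ) + a i := psumN_succ a i.isLt
            have h3 := psumN_le_degV a ((i:ℕ)+1)
            have h4 := hd a ha
            omega
          have hble := hle (i, ⟨(q:ℕ) - (i:ℕ), hjd⟩)
          have hbp : bpolExp d a (i, ⟨(q:ℕ) - (i:ℕ), hjd⟩) ≠ 0 := by
            rw [bpolExp_ne_zero_iff]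
            constructor
            · show psumN a (i:ℕ) ≤ (q:ℕ) - (i:ℕ)
              omega
            · show (q:ℕ) - (i:ℕ) < psumN a (i:ℕ) + a i
              omega
          have hcq : cexp (i, ⟨(q:ℕ) - (i:ℕ), hjd⟩) = b q := by
            show b ⟨(i:ℕ) + ((q:ℕ) - (i:ℕ)), hpd (i, ⟨(q:ℕ) - (i:ℕ), hjd⟩)⟩ = b q
            congr 1
            apply Fin.ext
            show (i:ℕ) + ((q:ℕ) - (i:ℕ)) = (q:ℕ)
            omega
          have hble2 : bpolExp d a (i, ⟨(q:ℕ) - (i:ℕ), hjd⟩) ≤ b q := by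
            rw [← hcq]
            exact hble
          have hs1 : sigmaExp N a q ≤ 1 := sigmaExp_le_one a q
          omega
      exact hgoal
  refine ⟨hpart1, ?_⟩
  -- the key pairwise fact
  have hqexists : ∀ s s' : Fin r, s' ≠ s → ∃ q : Fin N,
      (∃ i : Fin (t s'), (q:ℕ) = (γ s' i:ℕ) + (i:ℕ)) ∧
      ¬(∃ i : Fin (t s), (q:ℕ) = (γ s i:ℕ) + (i:ℕ)) := by
    intro s s' hnees
    by_contra hno
    push_neg at hno
    -- strict monotonicity of the diagonal values
    have hstrictγ : ∀ (s0 : Fin r) (ja jb : Fin (t s0)), ja < jb →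
        (γ s0 ja:ℕ) + (ja:ℕ) < (γ s0 jb:ℕ) + (jb:ℕ) := by
      intro s0 ja jb hab
      have h1 : (ja:ℕ) < (jb:ℕ) := Fin.lt_def.mp hab
      have h2' : (γ s0 ja:ℕ) ≤ (γ s0 jb:ℕ) :=
        hmono s0 (ja:ℕ) (jb:ℕ) ja.isLt jb.isLt (le_of_lt h1)
      omega
    by_cases hBA : ∃ q : Fin N, (∃ i : Fin (t s), (q:ℕ) = (γ s i:ℕ) + (i:ℕ)) ∧
        ¬(∃ i' : Fin (t s'), (q:ℕ) = (γ s' i':ℕ) + (i':ℕ))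
    · -- CASE A : build a monomial of I whose σ-support avoids F_s ∖ {q0}
      obtain ⟨q0, ⟨i0, hq0v⟩, hq0n⟩ := hBA
      have tpos : t s - 1 < t s := by have := i0.isLt; omega
      obtain ⟨u, humin, hucov, huzero⟩ := hwitness s ⟨t s - 1, tpos⟩
      -- bottom bounds for the top witness
      have hbot : ∀ v, ∀ _ : v + 1 < t s, ∀ hv2 : v < t s,
          psumN u (v+1) ≤ (γ s ⟨v, hv2⟩:ℕ) := by
        intro v
        induction v with
        | zero =>
          intro hv1 hv2
          have hz : ¬(psumN u 0 ≤ (γ s ⟨0, hv2⟩:ℕ) ∧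
              (γ s ⟨0, hv2⟩:ℕ) < psumN u 0 + u ⟨0, lt_of_lt_of_le hv2 (ht s)⟩) :=
            huzero ⟨0, hv2⟩ (by
              intro hE
              have h3 : (0:ℕ) = t s - 1 := congrArg Fin.val hE
              omega)
          have h0 : psumN u 0 = 0 := psumN_zero u
          have hs1 : psumN u (0+1) = psumN u 0 + u ⟨0, lt_of_lt_of_le hv2 (ht s)⟩ :=
            psumN_succ u (lt_of_lt_of_le hv2 (ht s))
          by_contra hc
          push_neg at hc
          exact hz ⟨by omega, by omega⟩
        | succ v ih =>
          intro hv1 hv2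
          have hvv2 : v < t s := by omega
          have hprev := ih (by omega) hvv2
          have hmono2 : (γ s ⟨v, hvv2⟩:ℕ) ≤ (γ s ⟨v+1, hv2⟩:ℕ) := hmonoc s v hvv2 hv2
          have hz : ¬(psumN u (v+1) ≤ (γ s ⟨v+1, hv2⟩:ℕ) ∧
              (γ s ⟨v+1, hv2⟩:ℕ) < psumN u (v+1) + u ⟨v+1, lt_of_lt_of_le hv2 (ht s)⟩) :=
            huzero ⟨v+1, hv2⟩ (by
              intro hE
              have h3 : v + 1 = t s - 1 := congrArg Fin.val hE
              omega)
          have hs1 : psumN u (v+1+1) = psumN u (v+1) + u ⟨v+1, lt_of_lt_of_le hv2 (ht s)⟩ :=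
            psumN_succ u (lt_of_lt_of_le hv2 (ht s))
          by_contra hc
          push_neg at hc
          exact hz ⟨by omega, by omega⟩
      set e := degV u with hedef
      set Tf : ℕ → ℕ := fun rr =>
        if rr = 0 then 0
        else if h1 : rr ≤ (i0:ℕ) then
          min e ((γ s ⟨rr - 1, by have := i0.isLt; omega⟩ : Fin d):ℕ)
        else if h2 : rr < t s then min e ((γ s ⟨rr, h2⟩:ℕ) + 1)
        else e
        with hTf
      have hT0 : Tf 0 = 0 := by
        simp [hTf]
      have hTa : ∀ rr (ha1 : 1 ≤ rr) (ha2 : rr ≤ (i0:ℕ)) (ha3 : rr - 1 < t s),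
          Tf rr = min e ((γ s ⟨rr - 1, ha3⟩:ℕ)) := by
        intro rr ha1 ha2 ha3
        simp only [hTf]
        rw [if_neg (by omega), dif_pos ha2]
      have hTb : ∀ rr (hb2 : rr < t s) (hb1 : (i0:ℕ) < rr),
          Tf rr = min e ((γ s ⟨rr, hb2⟩:ℕ) + 1) := by
        intro rr hb2 hb1
        simp only [hTf]
        rw [if_neg (by omega), dif_neg (by omega), dif_pos hb2]
      have hTc : ∀ rr, t s ≤ rr → Tf rr = e := by
        intro rr hcr
        have hi0r := i0.isLt
        simp only [hTf]
        rw [if_neg (by omega), dif_neg (by omega), dif_neg (by omega)]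
      have hTle : ∀ rr, Tf rr ≤ e := by
        intro rr
        rcases Nat.eq_zero_or_pos rr with h0 | h0
        · rw [h0, hT0]; omega
        · rcases le_or_gt rr (i0:ℕ) with hA | hA
          · rw [hTa rr h0 hA (by have := i0.isLt; omega)]
            omega
          · rcases Nat.lt_or_ge rr (t s) with hB | hB
            · rw [hTb rr hB hA]; omega
            · rw [hTc rr hB]
      have hTmono : ∀ rr, Tf rr ≤ Tf (rr+1) := by
        intro rr
        rcases Nat.eq_zero_or_pos rr with h0 | h0
        · rw [h0, hT0]; exact Nat.zero_le _
        · rcases le_or_gt (rr+1) (i0:ℕ) with hA | hA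
          · have hr3 : rr - 1 < t s := by have := i0.isLt; omega
            have hr4 : rr + 1 - 1 < t s := by have := i0.isLt; omega
            rw [hTa rr h0 (by omega) hr3, hTa (rr+1) (by omega) hA hr4]
            have hm2 := hmono s (rr-1) (rr+1-1) hr3 hr4 (by omega)
            omega
          · rcases le_or_gt rr (i0:ℕ) with hA2 | hA2
            · have hr3 : rr - 1 < t s := by have := i0.isLt; omega
              rw [hTa rr h0 hA2 hr3]
              rcases Nat.lt_or_ge (rr+1) (t s) with hB | hB
              · rw [hTb (rr+1) hB (by omega)]
                have hm2 := hmono s (rr-1) (rr+1) hr3 hB (by omega)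
                omega
              · rw [hTc (rr+1) hB]
                omega
            · rcases Nat.lt_or_ge rr (t s) with hB | hB
              · rw [hTb rr hB hA2]
                rcases Nat.lt_or_ge (rr+1) (t s) with hB2 | hB2
                · rw [hTb (rr+1) hB2 (by omega)]
                  have hm2 := hmono s rr (rr+1) hB hB2 (by omega)
                  omega
                · rw [hTc (rr+1) hB2]; omega
              · rw [hTc rr hB, hTc (rr+1) (by omega)]
      set mexp : Fin n → ℕ := fun w => Tf ((w:ℕ)+1) - Tf (w:ℕ) with hmexp
      have hpsm : ∀ rr, psumN mexp rr = Tf rr := by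
        intro rr
        induction rr with
        | zero => rw [psumN_zero, hT0]
        | succ rr ih =>
          rcases Nat.lt_or_ge rr n with hrn | hrn
          · have h1 : psumN mexp (rr+1) = psumN mexp rr + mexp ⟨rr, hrn⟩ := psumN_succ mexp hrn
            have h2 : mexp ⟨rr, hrn⟩ = Tf (rr+1) - Tf rr := rfl
            have h3 := hTmono rr
            rw [h1, h2, ih]
            omega
          · have h1 : psumN mexp (rr+1) = degV mexp := psumN_stable mexp (by omega)
            have h2 : psumN mexp rr = degV mexp := psumN_stable mexp (by omega)
            have h4 : t s ≤ rr := le_trans (ht s) hrn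
            rw [h1, ← h2, ih, hTc rr h4, hTc (rr+1) (by omega)]
      have hdegm : degV mexp = e := by
        have h2 := hpsm n
        rw [hTc n (ht s)] at h2
        have h1 := psumN_stable mexp (le_refl n)
        omega
      have hdomu : ∀ rr, psumN u rr ≤ Tf rr := by
        intro rr
        rcases Nat.eq_zero_or_pos rr with h0 | h0
        · rw [h0, hT0, psumN_zero u]
        · have hle1 : psumN u rr ≤ e := psumN_le_degV u rr
          rcases le_or_gt rr (i0:ℕ) with hA | hA
          · have hr3 : rr - 1 < t s := by have := i0.isLt; omega
            rw [hTa rr h0 hA hr3]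
            have hb := hbot (rr-1) (by have := i0.isLt; omega) hr3
            have he3 : rr - 1 + 1 = rr := by omega
            rw [he3] at hb
            omega
          · rcases Nat.lt_or_ge rr (t s) with hB | hB
            · rw [hTb rr hB hA]
              have hr3 : rr - 1 < t s := by omega
              have hb := hbot (rr-1) (by omega) hr3
              have he3 : rr - 1 + 1 = rr := by omega
              rw [he3] at hb
              have hm2 := hmono s (rr-1) rr hr3 hB (by omega)
              omega
            · rw [hTc rr hB]
              omega
      have hmm : monF k mexp ∈ I := by
        refine dominate_mem hss
          (∑ rr ∈ Finset.range (n+1), (psumN mexp rr - psumN u rr)) u mexp humin.1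
          ?_ (fun rr => by rw [hpsm]; exact hdomu rr) le_rfl
        rw [hdegm, hedef]
      have havoid : ∀ j2 : Fin (t s), j2 ≠ i0 → ∀ q : Fin N,
          sigmaExp N mexp q ≠ 0 → (q:ℕ) ≠ (γ s j2:ℕ) + (j2:ℕ) := by
        intro j2 hne2 q hqz hqe
        obtain ⟨iw, hw1, hw2⟩ := (sigmaExp_ne_zero_iff mexp q).mp hqz
        have hps1 : psumN mexp (iw:ℕ) = Tf (iw:ℕ) := hpsm (iw:ℕ)
        have hps2 : psumN mexp (iw:ℕ) + mexp iw = Tf ((iw:ℕ)+1) := by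
          have h1 := hpsm ((iw:ℕ)+1)
          have h2 : psumN mexp ((iw:ℕ)+1) = psumN mexp (iw:ℕ) + mexp iw :=
            psumN_succ mexp iw.isLt
          omega
        have hj2t := j2.isLt
        have hi0t := i0.isLt
        have hji0 : (j2:ℕ) ≠ (i0:ℕ) := fun hE => hne2 (Fin.ext hE)
        have hTiv := hTmono (iw:ℕ)
        have hTivle := hTle ((iw:ℕ)+1)
        have hTivle2 := hTle (iw:ℕ)
        by_cases hTfe : Tf (iw:ℕ) = e
        · omega
        · have hive : (iw:ℕ) < t s := by
            by_contra hcn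
            push_neg at hcn
            exact hTfe (hTc (iw:ℕ) hcn)
          rcases Nat.lt_or_ge (j2:ℕ) (iw:ℕ) with hcase | hcase
          · have hiv1 : 1 ≤ (iw:ℕ) := by omega
            rcases le_or_gt (iw:ℕ) (i0:ℕ) with hc2 | hc2
            · have hr3 : (iw:ℕ) - 1 < t s := by omega
              have hTv := hTa (iw:ℕ) hiv1 hc2 hr3
              have hm3' : (γ s j2:ℕ) ≤ (γ s ⟨(iw:ℕ)-1, hr3⟩:ℕ) :=
                hmono s (j2:ℕ) ((iw:ℕ)-1) hj2t hr3 (by omega)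
              omega
            · have hTv := hTb (iw:ℕ) hive hc2
              have hm3' : (γ s j2:ℕ) ≤ (γ s ⟨(iw:ℕ), hive⟩:ℕ) :=
                hmono s (j2:ℕ) (iw:ℕ) hj2t hive (by omega)
              omega
          · rcases Nat.lt_or_ge (iw:ℕ) (i0:ℕ) with hc2 | hc2
            · have hr4 : (iw:ℕ)+1-1 < t s := by omega
              have hTv := hTa ((iw:ℕ)+1) (by omega) (by omega) hr4
              have hm3' : (γ s ⟨(iw:ℕ)+1-1, hr4⟩:ℕ) ≤ (γ s j2:ℕ) :=
                hmono s ((iw:ℕ)+1-1) (j2:ℕ) hr4 hj2t (by omega)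
              omega
            · rcases eq_or_lt_of_le hcase with hc3 | hc3
              · have hjgt : (i0:ℕ) < (j2:ℕ) := by omega
                have hTv := hTb (iw:ℕ) hive (by omega)
                have hγeq2 : (γ s ⟨(iw:ℕ), hive⟩:ℕ) = (γ s j2:ℕ) := by
                  have h6 : (⟨(iw:ℕ), hive⟩ : Fin (t s)) = j2 := Fin.ext hc3
                  rw [h6]
                omega
              · have hb2 : (iw:ℕ)+1 < t s := by omega
                have hTv := hTb ((iw:ℕ)+1) hb2 (by omega)
                have hm3' : (γ s ⟨(iw:ℕ)+1, hb2⟩:ℕ) ≤ (γ s j2:ℕ) :=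
                  hmono s ((iw:ℕ)+1) (j2:ℕ) hb2 hj2t (by omega)
                omega
      obtain ⟨g, hgmin, hgle, hgal⟩ := closure_aligned hss mexp hmm
      have hsig : monF k (sigmaExp N g) ∈ Q s' := by
        have h1 : monF k (sigmaExp N g) ∈ sigmaIdeal N I := Ideal.subset_span ⟨g, hgmin, rfl⟩
        rw [hpart1] at h1
        exact Ideal.mem_iInf.mp h1 s'
      rw [hQ, monF_mem_varIdeal] at hsig
      obtain ⟨q, hq1, hqne⟩ := hsig
      have hmq : sigmaExp N mexp q ≠ 0 := sigmaExp_le_of_aligned hgle hgal q hqne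
      obtain ⟨i', hqv'⟩ := hq1
      obtain ⟨j2, hj2⟩ := hno q ⟨i', hqv'⟩
      have hj2ne : j2 ≠ i0 := by
        intro hE
        apply hq0n
        refine ⟨i', ?_⟩
        rw [hq0v]
        rw [hE] at hj2
        omega
      exact havoid j2 hj2ne q hmq hj2
    · -- CASE B : the two components are equal, contradicting irredundancy
      push_neg at hBA
      have hφ : ∀ i' : Fin (t s'), ∃ i : Fin (t s),
          (γ s' i':ℕ) + (i':ℕ) = (γ s i:ℕ) + (i:ℕ) := by
        intro i'
        obtain ⟨i, hi⟩ := hno ⟨(γ s' i':ℕ) + (i':ℕ), hqbound s' i'⟩ ⟨i', rfl⟩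
        exact ⟨i, hi⟩
      have hψ : ∀ i : Fin (t s), ∃ i' : Fin (t s'),
          (γ s i:ℕ) + (i:ℕ) = (γ s' i':ℕ) + (i':ℕ) := by
        intro i
        obtain ⟨i', hi'⟩ := hBA ⟨(γ s i:ℕ) + (i:ℕ), hqbound s i⟩ ⟨i, rfl⟩
        exact ⟨i', hi'⟩
      choose φ hφspec using hφ
      choose ψ hψspec using hψ
      have hφmono : ∀ ia ib : Fin (t s'), ia < ib → φ ia < φ ib := by
        intro ia ib hab
        have h1 := hφspec ia
        have h2 := hφspec ib
        have h3 := hstrictγ s' ia ib hab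
        rcases lt_trichotomy (φ ia) (φ ib) with hcc | hcc | hcc
        · exact hcc
        · exfalso; rw [hcc] at h1; omega
        · exfalso; have h4 := hstrictγ s (φ ib) (φ ia) hcc; omega
      have hψmono : ∀ ia ib : Fin (t s), ia < ib → ψ ia < ψ ib := by
        intro ia ib hab
        have h1 := hψspec ia
        have h2 := hψspec ib
        have h3 := hstrictγ s ia ib hab
        rcases lt_trichotomy (ψ ia) (ψ ib) with hcc | hcc | hcc
        · exact hcc
        · exfalso; rw [hcc] at h1; omega
        · exfalso; have h4 := hstrictγ s' (ψ ib) (ψ ia) hcc; omega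
      have hφle := finmap_le_apply φ hφmono
      have hψle := finmap_le_apply ψ hψmono
      have hval : ∀ i' : Fin (t s'), ((φ i'):ℕ) = (i':ℕ) := by
        intro i'
        have h1 := hφspec i'
        have h2 := hψspec (φ i')
        have h3 : ψ (φ i') = i' := by
          rcases lt_trichotomy (ψ (φ i')) i' with hcc | hcc | hcc
          · exfalso; have h4 := hstrictγ s' _ _ hcc; omega
          · exact hcc
          · exfalso; have h4 := hstrictγ s' _ _ hcc; omega
        have h4 := hφle (i':ℕ) i' rfl
        have h5 := hψle ((φ i'):ℕ) (φ i') rfl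
        rw [h3] at h5
        omega
      have hγeq : ∀ i' : Fin (t s'), γ s (φ i') = γ s' i' := by
        intro i'
        have h1 := hφspec i'
        have h2 := hval i'
        apply Fin.ext
        omega
      have hPle : P s' ≤ P s := by
        rw [hP, hP]
        apply varIdeal_mono
        rintro p ⟨i', rfl⟩
        refine ⟨φ i', ?_⟩
        refine Prod.ext ?_ ?_
        · apply Fin.ext
          show (i':ℕ) = ((φ i'):ℕ)
          exact (hval i').symm
        · exact (hγeq i').symm
      exact hirr s (le_trans (hbi s s' hnees) hPle)
  -- conclude irredundancy
  intro s H
  set bvec : Fin N → ℕ := fun q =>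
    if (¬ ∃ i : Fin (t s), (q:ℕ) = (γ s i:ℕ) + (i:ℕ)) ∧
        (∃ s' : Fin r, s' ≠ s ∧ ∃ i : Fin (t s'), (q:ℕ) = (γ s' i:ℕ) + (i:ℕ))
    then 1 else 0 with hbvec
  have hbQ : ∀ s' : Fin r, s' ≠ s → monF k bvec ∈ Q s' := by
    intro s' hne
    rw [hQ, monF_mem_varIdeal]
    obtain ⟨q, hq1, hq2⟩ := hqexists s s' hne
    refine ⟨q, hq1, ?_⟩
    rw [hbvec]
    simp only
    rw [if_pos ⟨hq2, s', hne, hq1⟩]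
    omega
  have hmem : monF k bvec ∈ ⨅ s' ∈ Finset.univ.erase s, Q s' := by
    refine Ideal.mem_iInf.mpr (fun s' => Ideal.mem_iInf.mpr (fun hs' => ?_))
    exact hbQ s' (Finset.mem_erase.mp hs').1
  have hfin := H hmem
  rw [hQ, monF_mem_varIdeal] at hfin
  obtain ⟨q, hq1, hq2⟩ := hfin
  rw [hbvec] at hq2
  simp only at hq2
  by_cases hcond : (¬ ∃ i : Fin (t s), (q:ℕ) = (γ s i:ℕ) + (i:ℕ)) ∧
      (∃ s' : Fin r, s' ≠ s ∧ ∃ i : Fin (t s'), (q:ℕ) = (γ s' i:ℕ) + (i:ℕ))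
  · exact hcond.1 hq1
  · rw [if_neg hcond] at hq2
    exact hq2 rfl

end
end

section
/- For a strongly stable ideal I, the Alexander dual of I^σ equals (I*)^σ (up to identifying ambient polynomial rings with different numbers of variables): (I^σ)^∨ ≡ (I*)^σ. -/
open MvPolynomial Classical

noncomputable section

-- ===== Auxiliary machinery for the proof =====
namespace AdualSigmaAux

variable {σ : Type*} [Fintype σ] {k : Type*} [Field k]

/-- indicator exponent vector of a set -/
def ind {τ : Type*} (F : Set τ) : τ → ℕ := fun i => if i ∈ F then 1 else 0

lemma symm_add (u v : σ → ℕ) : Finsupp.equivFunOnFinite.symm (u + v) =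
    Finsupp.equivFunOnFinite.symm u + Finsupp.equivFunOnFinite.symm v := by
  ext i; simp

lemma monF_add (u v : σ → ℕ) : monF k (u + v) = monF k u * monF k v := by
  simp [monF, mon, symm_add, MvPolynomial.monomial_mul]

lemma mem_span_monF {A : Set (σ → ℕ)} {b : σ → ℕ} :
    monF k b ∈ Ideal.span ((monF k) '' A) ↔ ∃ a ∈ A, ∀ i, a i ≤ b i := by
  constructor
  · intro h
    have key : ∀ c : σ →₀ ℕ, MvPolynomial.coeff c (monF k b) ≠ 0 →
        ∃ a ∈ A, Finsupp.equivFunOnFinite.symm a ≤ c := by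
      have : ∀ x ∈ Ideal.span ((monF k) '' A), ∀ c : σ →₀ ℕ,
          MvPolynomial.coeff c x ≠ 0 → ∃ a ∈ A, Finsupp.equivFunOnFinite.symm a ≤ c := by
        intro x hx
        refine Submodule.span_induction ?_ ?_ ?_ ?_ hx
        · rintro q ⟨a, ha, rfl⟩ c hc
          refine ⟨a, ha, ?_⟩
          simp only [monF, mon, MvPolynomial.coeff_monomial] at hc
          split_ifs at hc with h'
          · exact le_of_eq h'
          · exact absurd rfl hc
        · intro c hc; simp at hc
        · intro p q _ _ hp hq c hc
          rw [MvPolynomial.coeff_add] at hc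
          rcases (by by_contra h'; push_neg at h'; rw [h'.1, h'.2] at hc; simp at hc :
            MvPolynomial.coeff c p ≠ 0 ∨ MvPolynomial.coeff c q ≠ 0) with h | h
          · exact hp c h
          · exact hq c h
        · intro r p _ hp c hc
          rw [smul_eq_mul, MvPolynomial.coeff_mul] at hc
          obtain ⟨x, hx, hne⟩ := Finset.exists_ne_zero_of_sum_ne_zero hc
          obtain ⟨a, ha, hle⟩ := hp x.2 (by intro h'; rw [h'] at hne; simp at hne)
          refine ⟨a, ha, hle.trans ?_⟩
          rw [Finset.HasAntidiagonal.mem_antidiagonal] at hx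
          exact hx ▸ le_add_self
      exact this _ h
    obtain ⟨a, ha, hle⟩ := key (Finsupp.equivFunOnFinite.symm b)
      (by simp [monF, mon, MvPolynomial.coeff_monomial])
    exact ⟨a, ha, fun i => by simpa using hle i⟩
  · rintro ⟨a, ha, hle⟩
    have : monF k b = monF k (b - a) * monF k a := by
      rw [← monF_add]
      congr 1; funext i; have := hle i; simp [Pi.sub_apply]; omega
    rw [this]
    exact Ideal.mul_mem_left _ _ (Ideal.subset_span ⟨a, ha, rfl⟩)

lemma X_eq_monF (i : σ) : (MvPolynomial.X i : MvPolynomial σ k) = monF k (Pi.single i 1) := by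
  rw [MvPolynomial.X, monF, mon]
  congr 1
  ext j
  simp [Finsupp.single_apply, Pi.single_apply, eq_comm]

lemma varIdeal_eq_span (F : Set σ) :
    varIdeal k F = Ideal.span ((monF k) '' ((fun i => Pi.single i 1) '' F)) := by
  unfold varIdeal
  congr 1
  rw [Set.image_image]
  exact Set.image_congr fun i _ => X_eq_monF i

lemma monF_mem_varIdeal {c : σ → ℕ} {F : Set σ} :
    monF k c ∈ varIdeal k F ↔ ∃ i ∈ F, 0 < c i := by
  rw [varIdeal_eq_span, mem_span_monF]
  constructor
  · rintro ⟨a, ⟨i, hi, rfl⟩, hle⟩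
    exact ⟨i, hi, lt_of_lt_of_le (by simp) (hle i)⟩
  · rintro ⟨i, hi, hc⟩
    refine ⟨Pi.single i 1, ⟨i, hi, rfl⟩, fun j => ?_⟩
    rcases eq_or_ne j i with rfl | h
    · simp; exact hc
    · simp [Pi.single_apply, h]

omit [Fintype σ] in
lemma varIdeal_mono {F F' : Set σ} (h : F ⊆ F') : varIdeal k F ≤ varIdeal k F' :=
  Ideal.span_mono (Set.image_mono h)

omit [Fintype σ] in
lemma exists_irred_comp [Finite σ] {J : Ideal (MvPolynomial σ k)} {F : Set σ}
    (h : J ≤ varIdeal k F) : ∃ F', F' ⊆ F ∧ IsIrredCompSF J F' := by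
  have main : ∀ m (F : Set σ), F.ncard ≤ m → J ≤ varIdeal k F →
      ∃ F', F' ⊆ F ∧ IsIrredCompSF J F' := by
    intro m
    induction m with
    | zero =>
      intro F hcard hle
      have : F = ∅ := by
        have := Set.toFinite F
        rw [← Set.ncard_eq_zero this]; omega
      subst this
      exact ⟨∅, subset_rfl, hle, fun F' hF' _ => Set.subset_empty_iff.mp hF'⟩
    | succ m ih =>
      intro F hcard hle
      by_cases hmin : ∀ F' ⊆ F, J ≤ varIdeal k F' → F' = F
      · exact ⟨F, subset_rfl, hle, hmin⟩
      · push_neg at hmin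
        obtain ⟨F', hsub, hle', hne⟩ := hmin
        have hss : F' ⊂ F := hsub.ssubset_of_ne hne
        have : F'.ncard ≤ m := by
          have := Set.ncard_lt_ncard hss (Set.toFinite F)
          omega
        obtain ⟨F'', h1, h2⟩ := ih F' this hle'
        exact ⟨F'', h1.trans hsub, h2⟩
  exact main F.ncard F le_rfl h

lemma rename_monF {τ₁ τ₂ : Type*} [Fintype τ₁] [Fintype τ₂] (e : τ₁ ≃ τ₂) (c : τ₁ → ℕ) :
    MvPolynomial.rename e (monF k c) = monF k (c ∘ e.symm) := by
  have he : Finsupp.mapDomain (⇑e) (Finsupp.equivFunOnFinite.symm c) =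
      Finsupp.equivFunOnFinite.symm (c ∘ ⇑e.symm) := by
    ext t
    rw [Finsupp.mapDomain_equiv_apply]
    simp
  rw [monF, mon, MvPolynomial.rename_monomial, he, monF, mon]

lemma rename_swap_monF {n d : ℕ} (c : Fin n × Fin d → ℕ) :
    MvPolynomial.rename (Prod.swap : Fin n × Fin d → Fin d × Fin n) (monF k c)
      = monF k (c ∘ (Prod.swap : Fin d × Fin n → Fin n × Fin d)) := by
  have h1 : (Prod.swap : Fin n × Fin d → Fin d × Fin n)
      = ⇑(Equiv.prodComm (Fin n) (Fin d)) := (Equiv.coe_prodComm _ _).symm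
  have h2 : (Prod.swap : Fin d × Fin n → Fin n × Fin d)
      = ⇑(Equiv.prodComm (Fin n) (Fin d)).symm := by
    simp [Equiv.prodComm_symm, Equiv.coe_prodComm]
  rw [h1, rename_monF, h2]

lemma mem_transposeIdeal {n d : ℕ} {J : Ideal (MvPolynomial (Fin n × Fin d) k)}
    {m : MvPolynomial (Fin n × Fin d) k} :
    m ∈ J ↔ MvPolynomial.rename (Prod.swap : Fin n × Fin d → Fin d × Fin n) m
      ∈ transposeIdeal J := by
  constructor
  · intro h
    exact Ideal.mem_map_of_mem _ h
  · intro h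
    have hsurj : Function.Surjective
        (MvPolynomial.rename (Prod.swap : Fin n × Fin d → Fin d × Fin n)
          : MvPolynomial (Fin n × Fin d) k →ₐ[k] MvPolynomial (Fin d × Fin n) k) := by
      have := (MvPolynomial.renameEquiv k (Equiv.prodComm (Fin n) (Fin d))).surjective
      rwa [show ⇑(MvPolynomial.renameEquiv k (Equiv.prodComm (Fin n) (Fin d))) =
        ⇑(MvPolynomial.rename (Prod.swap : Fin n × Fin d → Fin d × Fin n)
          : MvPolynomial (Fin n × Fin d) k →ₐ[k] MvPolynomial (Fin d × Fin n) k) by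
          rw [MvPolynomial.renameEquiv]; simp [Equiv.coe_prodComm]] at this
    rw [transposeIdeal, Ideal.mem_map_iff_of_surjective _ hsurj] at h
    obtain ⟨y, hy, hyx⟩ := h
    have : y = m := MvPolynomial.rename_injective _ Prod.swap_injective hyx
    exact this ▸ hy

lemma pos_ite {c : Prop} [Decidable c] : 0 < (if c then 1 else 0 : ℕ) ↔ c := by
  split_ifs with h <;> simp [h]

lemma psum_add_le_degV {n : ℕ} (a : Fin n → ℕ) (i : Fin n) : psum a i + a i ≤ degV a := by
  rw [_root_.psum, degV]
  have h1 : i ∉ Finset.univ.filter (fun j => j < i) := by simp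
  have h2 := Finset.sum_insert (f := a) h1
  have h3 : insert i (Finset.univ.filter (fun j => j < i)) ⊆ Finset.univ :=
    Finset.subset_univ _
  have h4 := Finset.sum_le_sum_of_subset (f := a) h3
  omega

/-- indicator decomposition for a subset -/
lemma ind_decomp {τ : Type*} {F' F : Set τ} (h : F' ⊆ F) :
    ind F = ind (F \ F') + ind F' := by
  funext q
  by_cases h1 : q ∈ F'
  · have h2 : q ∈ F := h h1
    simp [ind, h1, h2]
  · by_cases h2 : q ∈ F <;> simp [ind, h1, h2]


def BtSet (n d : ℕ) (b : Fin d → ℕ) : Set (Fin n × Fin d) :=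
  {p | _root_.psum b p.2 ≤ (p.1 : ℕ) ∧ (p.1 : ℕ) < _root_.psum b p.2 + b p.2}

def FbSet (N : ℕ) {d : ℕ} (b : Fin d → ℕ) : Set (Fin N) :=
  {q | ∃ j : Fin d, (j : ℕ) + _root_.psum b j ≤ (q : ℕ) ∧
    (q : ℕ) < (j : ℕ) + _root_.psum b j + b j}

def GFset (n d : ℕ) {N : ℕ} (F : Set (Fin N)) : Set (Fin n × Fin d) :=
  {p | ∃ f ∈ F, (f : ℕ) = (p.1 : ℕ) + (p.2 : ℕ)}

lemma span_le_varIdeal_iff {S : Set (σ → ℕ)} {F : Set σ} :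
    Ideal.span ((monF k) '' S) ≤ varIdeal k F ↔ ∀ c ∈ S, ∃ i ∈ F, 0 < c i := by
  rw [Ideal.span_le]
  constructor
  · intro h c hc; exact monF_mem_varIdeal.mp (h ⟨c, hc, rfl⟩)
  · rintro h q ⟨c, hc, rfl⟩; exact monF_mem_varIdeal.mpr (h c hc)

lemma adual_eq (J : Ideal (MvPolynomial σ k)) :
    adual J = Ideal.span ((monF k) '' {c | ∃ G, IsIrredCompSF J G ∧ c = ind G}) := by
  unfold adual
  congr 1
  ext q
  constructor
  · rintro ⟨F, hF, rfl⟩; exact ⟨ind F, ⟨F, hF, rfl⟩, rfl⟩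
  · rintro ⟨c, ⟨G, hG, rfl⟩, rfl⟩; exact ⟨G, hG, rfl⟩

lemma bpolIdeal_eq {m : ℕ} (dm : ℕ) (K : Ideal (MvPolynomial (Fin m) k)) :
    bpolIdeal dm K = Ideal.span ((monF k) '' (bpolExp dm '' minGens K)) := by
  unfold bpolIdeal
  congr 1
  rw [Set.image_image]
  ext q
  constructor
  · rintro ⟨a, ha, rfl⟩; exact ⟨a, ha, rfl⟩
  · rintro ⟨a, ha, rfl⟩; exact ⟨a, ha, rfl⟩

lemma sigmaIdeal_eq {m : ℕ} (N : ℕ) (K : Ideal (MvPolynomial (Fin m) k)) :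
    sigmaIdeal N K = Ideal.span ((monF k) '' (sigmaExp N '' minGens K)) := by
  unfold sigmaIdeal
  congr 1
  rw [Set.image_image]
  ext q
  constructor
  · rintro ⟨a, ha, rfl⟩; exact ⟨a, ha, rfl⟩
  · rintro ⟨a, ha, rfl⟩; exact ⟨a, ha, rfl⟩

lemma gen_bridge {n d N : ℕ} (hN : n + d ≤ N + 1) (a : Fin n → ℕ) (hda : degV a ≤ d)
    (F : Set (Fin N)) :
    (∃ q ∈ F, 0 < sigmaExp N a q) ↔ (∃ p ∈ GFset n d F, 0 < bpolExp d a p) := by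
  constructor
  · rintro ⟨q, hq, hpos⟩
    simp only [sigmaExp, pos_ite] at hpos
    obtain ⟨i, h1, h2⟩ := hpos
    have hub := psum_add_le_degV a i
    have hj : (q : ℕ) - (i : ℕ) < d := by omega
    refine ⟨(i, ⟨(q : ℕ) - (i : ℕ), hj⟩), ⟨q, hq, show (q : ℕ) = (i : ℕ) + ((q : ℕ) - (i : ℕ)) by omega⟩, ?_⟩
    simp only [bpolExp, pos_ite]
    exact ⟨show _root_.psum a i ≤ (q : ℕ) - (i : ℕ) by omega,
      show (q : ℕ) - (i : ℕ) < _root_.psum a i + a i by omega⟩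
  · rintro ⟨⟨i, j⟩, ⟨f, hf, hfe⟩, hpos⟩
    simp only [bpolExp, pos_ite] at hpos
    obtain ⟨hp1, hp2⟩ : _root_.psum a i ≤ (j : ℕ) ∧ (j : ℕ) < _root_.psum a i + a i := hpos
    have hfe' : (f : ℕ) = (i : ℕ) + (j : ℕ) := hfe
    refine ⟨f, hf, ?_⟩
    simp only [sigmaExp, pos_ite]
    exact ⟨i, by omega, by omega⟩

lemma Bt_subset_GF_Fb {n d N : ℕ} (hN : n + d ≤ N + 1) (b : Fin d → ℕ) :
    BtSet n d b ⊆ GFset n d (FbSet N b) := by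
  rintro ⟨i, j⟩ hmem
  obtain ⟨h1, h2⟩ : _root_.psum b j ≤ (i : ℕ) ∧ (i : ℕ) < _root_.psum b j + b j := hmem
  have hiN : (i : ℕ) + (j : ℕ) < N := by have := i.isLt; have := j.isLt; omega
  refine ⟨⟨(i : ℕ) + (j : ℕ), hiN⟩, ⟨j,
    show (j : ℕ) + _root_.psum b j ≤ (i : ℕ) + (j : ℕ) by omega,
    show (i : ℕ) + (j : ℕ) < (j : ℕ) + _root_.psum b j + b j by omega⟩, rfl⟩

lemma Fb_subset {n d N : ℕ} {b : Fin d → ℕ} (hdb : degV b ≤ n) {F : Set (Fin N)}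
    (hBG : BtSet n d b ⊆ GFset n d F) : FbSet N b ⊆ F := by
  rintro q ⟨j, h1, h2⟩
  have hub := psum_add_le_degV b j
  have hin : ((q : ℕ) - (j : ℕ)) < n := by omega
  obtain ⟨f, hf, hfe⟩ := hBG (a := (⟨(q : ℕ) - (j : ℕ), hin⟩, j))
    ⟨show _root_.psum b j ≤ (q : ℕ) - (j : ℕ) by omega,
     show (q : ℕ) - (j : ℕ) < _root_.psum b j + b j by omega⟩
  have hfe' : (f : ℕ) = ((q : ℕ) - (j : ℕ)) + (j : ℕ) := hfe
  have : f = q := Fin.ext (by omega)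
  exact this ▸ hf

lemma cover_Bt {n d : ℕ} {I : Ideal (MvPolynomial (Fin n) k)}
    {Istar : Ideal (MvPolynomial (Fin d) k)}
    (hdual : bpolIdeal n Istar = transposeIdeal (adual (bpolIdeal d I)))
    {b : Fin d → ℕ} (hb : b ∈ minGens Istar) :
    bpolIdeal d I ≤ varIdeal k (BtSet n d b) := by
  have hmem : monF k (bpolExp n b) ∈ bpolIdeal n Istar :=
    Ideal.subset_span ⟨b, hb, rfl⟩
  rw [hdual] at hmem
  have hrc : MvPolynomial.rename (Prod.swap : Fin n × Fin d → Fin d × Fin n)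
      (monF k (bpolExp n b ∘ (Prod.swap : Fin n × Fin d → Fin d × Fin n)))
      = monF k (bpolExp n b) := by
    rw [rename_swap_monF]
    rfl
  have hmc : monF k (bpolExp n b ∘ (Prod.swap : Fin n × Fin d → Fin d × Fin n))
      ∈ adual (bpolIdeal d I) := by
    rw [mem_transposeIdeal (J := adual (bpolIdeal d I)), hrc]; exact hmem
  rw [adual_eq, mem_span_monF] at hmc
  obtain ⟨cg, ⟨G, hG, rfl⟩, hle⟩ := hmc
  have hsub : G ⊆ BtSet n d b := by
    intro p hp
    have h1 := hle p
    have h2 : ind G p = 1 := by simp [ind, hp]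
    have h3 : 0 < bpolExp n b (p.2, p.1) := by
      have h4 : (bpolExp n b ∘ (Prod.swap : Fin n × Fin d → Fin d × Fin n)) p
          = bpolExp n b (p.2, p.1) := rfl
      omega
    simp only [bpolExp, pos_ite] at h3
    exact h3
  exact le_trans hG.1 (varIdeal_mono hsub)

lemma extract_b {n d : ℕ} {I : Ideal (MvPolynomial (Fin n) k)}
    {Istar : Ideal (MvPolynomial (Fin d) k)}
    (hdual : bpolIdeal n Istar = transposeIdeal (adual (bpolIdeal d I)))
    {G : Set (Fin n × Fin d)} (h : bpolIdeal d I ≤ varIdeal k G) :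
    ∃ b ∈ minGens Istar, BtSet n d b ⊆ G := by
  obtain ⟨G', hsub, hG'⟩ := exists_irred_comp h
  have hmem : monF k (ind G') ∈ adual (bpolIdeal d I) :=
    Ideal.subset_span ⟨G', hG', rfl⟩
  have hmem2 : MvPolynomial.rename (Prod.swap : Fin n × Fin d → Fin d × Fin n)
      (monF k (ind G')) ∈ bpolIdeal n Istar := by
    rw [hdual]; exact mem_transposeIdeal.mp hmem
  rw [rename_swap_monF, bpolIdeal_eq, mem_span_monF] at hmem2
  obtain ⟨cb, ⟨b, hb, rfl⟩, hle⟩ := hmem2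
  refine ⟨b, hb, fun p hp => hsub ?_⟩
  have h1 := hle (p.2, p.1)
  have h2 : 0 < bpolExp n b (p.2, p.1) := by
    simp only [bpolExp, pos_ite]
    exact hp
  have h3 : (ind G' ∘ (Prod.swap : Fin d × Fin n → Fin n × Fin d)) (p.2, p.1) = ind G' p := by
    simp [Function.comp]
  by_contra hpG
  have h4 : ind G' p = 0 := by simp [ind, hpG]
  omega

end AdualSigmaAux

/-- For a strongly stable ideal `I`, the Alexander dual of `I^σ` equals
`(I*)^σ`, after identifying the ambient polynomial rings: `(I^σ)^∨ ≡ (I*)^σ`. -/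
theorem adual_sigma_eq_sigma_dual {n d N : ℕ} {k : Type*} [Field k]
    (I : Ideal (MvPolynomial (Fin n) k)) (hss : StronglyStable I) (hd : GensDegLE I d)
    (hN : n + d ≤ N + 1)
    (Istar : Ideal (MvPolynomial (Fin d) k))
    (hss' : StronglyStable Istar) (hd' : GensDegLE Istar n)
    (hdual : bpolIdeal n Istar = transposeIdeal (adual (bpolIdeal d I))) :
    adual (sigmaIdeal N I) = sigmaIdeal N Istar := by
  classical
  have hcovS : ∀ F : Set (Fin N), sigmaIdeal N I ≤ varIdeal k F ↔
      ∀ a ∈ minGens I, ∃ q ∈ F, 0 < sigmaExp N a q := by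
    intro F
    rw [AdualSigmaAux.sigmaIdeal_eq, AdualSigmaAux.span_le_varIdeal_iff]
    constructor
    · intro h a ha; exact h _ ⟨a, ha, rfl⟩
    · rintro h c ⟨a, ha, rfl⟩; exact h a ha
  have hcovB : ∀ G : Set (Fin n × Fin d), bpolIdeal d I ≤ varIdeal k G ↔
      ∀ a ∈ minGens I, ∃ p ∈ G, 0 < bpolExp d a p := by
    intro G
    rw [AdualSigmaAux.bpolIdeal_eq, AdualSigmaAux.span_le_varIdeal_iff]
    constructor
    · intro h a ha; exact h _ ⟨a, ha, rfl⟩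
    · rintro h c ⟨a, ha, rfl⟩; exact h a ha
  have hFbcov : ∀ b ∈ minGens Istar,
      sigmaIdeal N I ≤ varIdeal k (AdualSigmaAux.FbSet N b) := by
    intro b hb
    rw [hcovS]
    intro a ha
    rw [AdualSigmaAux.gen_bridge hN a (hd a ha)]
    have h1 : bpolIdeal d I ≤ varIdeal k (AdualSigmaAux.GFset n d (AdualSigmaAux.FbSet N b)) :=
      le_trans (AdualSigmaAux.cover_Bt hdual hb)
        (AdualSigmaAux.varIdeal_mono (AdualSigmaAux.Bt_subset_GF_Fb hN b))
    exact (hcovB _).mp h1 a ha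
  have hindeq : ∀ b : Fin d → ℕ,
      AdualSigmaAux.ind (AdualSigmaAux.FbSet N b) = sigmaExp N b := by
    intro b
    funext q
    simp only [AdualSigmaAux.ind, AdualSigmaAux.FbSet, sigmaExp, Set.mem_setOf_eq]
  apply le_antisymm
  · rw [AdualSigmaAux.adual_eq, Ideal.span_le]
    rintro q ⟨cF, ⟨F, hF, rfl⟩, rfl⟩
    have hcovGF : bpolIdeal d I ≤ varIdeal k (AdualSigmaAux.GFset n d F) := by
      rw [hcovB]
      intro a ha
      exact (AdualSigmaAux.gen_bridge hN a (hd a ha) F).mp ((hcovS F).mp hF.1 a ha)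
    obtain ⟨b, hb, hBt⟩ := AdualSigmaAux.extract_b hdual hcovGF
    have hFbF : AdualSigmaAux.FbSet N b ⊆ F := AdualSigmaAux.Fb_subset (hd' b hb) hBt
    have hEq : AdualSigmaAux.FbSet N b = F := hF.2 _ hFbF (hFbcov b hb)
    have heq2 : AdualSigmaAux.ind F = sigmaExp N b := by rw [← hEq]; exact hindeq b
    show monF k (AdualSigmaAux.ind F) ∈ sigmaIdeal N Istar
    rw [heq2]
    exact Ideal.subset_span ⟨b, hb, rfl⟩
  · refine Ideal.span_le.mpr ?_
    rintro q ⟨b, hb, rfl⟩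
    obtain ⟨F', hF'sub, hF'⟩ := AdualSigmaAux.exists_irred_comp (hFbcov b hb)
    have hgen : monF k (AdualSigmaAux.ind F') ∈ adual (sigmaIdeal N I) :=
      Ideal.subset_span ⟨F', hF', rfl⟩
    have hdecomp : monF k (sigmaExp N b) =
        monF k (AdualSigmaAux.ind (AdualSigmaAux.FbSet N b \ F')) *
          monF k (AdualSigmaAux.ind F') := by
      rw [← AdualSigmaAux.monF_add, ← AdualSigmaAux.ind_decomp hF'sub, hindeq b]
    rw [hdecomp]
    exact Ideal.mul_mem_left _ _ hgen


end
end
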